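/- arXiv:2511.01410 — 5 statements merged into one kernel-verified Lean document; each statement's English description precedes it below -/
import Mathlib

section
/- Let k be a field of characteristic zero, A a commutative associative k-algebra, and D_1, …, D_n (with n > 1) derivations of A. Let {−,−} be a derived operation of D-order at most m built from D_1, …, D_n. Then for every integer p ≥ m + 1 and d = 1 + (1 + n + n² + … + n^p), the left standard identity holds: s_{d,l}^{{−,−}}(a_1, …, a_d) = 0 for all a_1, …, a_d ∈ A. -/
namespace DerivedOpAux
open scoped Pointwise

variable {k A : Type*} [Field k] [CommRing A] [Algebra k A]
variable {n : ℕ} (D : Fin n → Derivation k A A)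

/-- Composition of the derivations along a word. -/
noncomputable def dword (w : List (Fin n)) : Module.End k A :=
  (w.map fun i => ((D i : A →ₗ[k] A) : Module.End k A)).prod

@[simp] lemma dword_nil : dword D ([] : List (Fin n)) = 1 := rfl

lemma dword_cons (i : Fin n) (w : List (Fin n)) :
    dword D (i :: w) = ((D i : A →ₗ[k] A) : Module.End k A) * dword D w := by
  simp [dword]

lemma dword_cons_apply (i : Fin n) (w : List (Fin n)) (x : A) :
    dword D (i :: w) x = D i (dword D w x) := by
  simp [dword_cons, Module.End.mul_apply]

lemma dword_append (u v : List (Fin n)) :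
    dword D (u ++ v) = dword D u * dword D v := by
  simp [dword]

/-- Words of length at most `q`, as endomorphisms. -/
def WordsLE (q : ℕ) : Set (Module.End k A) :=
  {T | ∃ w : List (Fin n), w.length ≤ q ∧ T = dword D w}

lemma wordsLE_mono {q q' : ℕ} (h : q ≤ q') : WordsLE D q ⊆ WordsLE D q' := by
  rintro x ⟨w, hw, rfl⟩; exact ⟨w, hw.trans h, rfl⟩

def genSet : Set (Module.End k A) :=
  insert 1 (Set.range fun i => ((D i : A →ₗ[k] A) : Module.End k A))

lemma pow_le_span (q : ℕ) :
    (Submodule.span k (insert (1 : Module.End k A)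
        (Set.range fun i => (D i : A →ₗ[k] A)))) ^ q ≤
      Submodule.span k (WordsLE D q) := by
  show Submodule.span k (genSet D) ^ q ≤ Submodule.span k (WordsLE D q)
  induction q with
  | zero =>
      rw [Submodule.pow_zero, Submodule.one_eq_span]
      exact Submodule.span_mono (by rintro x rfl; exact ⟨[], le_rfl, rfl⟩)
  | succ q ih =>
      rw [Submodule.pow_succ]
      calc Submodule.span k (genSet D) ^ q * Submodule.span k (genSet D)
          ≤ Submodule.span k (WordsLE D q) * Submodule.span k (genSet D) :=
            mul_le_mul' ih le_rfl
        _ = Submodule.span k (WordsLE D q * genSet D) := Submodule.span_mul_span k _ _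
        _ ≤ Submodule.span k (WordsLE D (q + 1)) := by
            apply Submodule.span_mono
            rintro x hx
            rw [Set.mem_mul] at hx
            obtain ⟨y, ⟨w, hw, rfl⟩, z, hz, rfl⟩ := hx
            rcases hz with rfl | ⟨i, rfl⟩
            · exact ⟨w, hw.trans (Nat.le_succ q), (mul_one _).symm⟩
            · exact ⟨w ++ [i], by simp [Nat.succ_le_succ hw],
                by rw [dword_append]; rfl⟩


/-- Elementary terms: `a b ↦ (∏ i, w_i(a i)) * v(b)` with total word length at most `N`. -/
def TSet (e N : ℕ) : Set ((Fin e → A) → A → A) :=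
  {F | ∃ (ws : Fin e → List (Fin n)) (v : List (Fin n)),
    ((∑ i, (ws i).length) + v.length ≤ N) ∧
    F = fun a b => (∏ i, dword D (ws i) (a i)) * dword D v b}

noncomputable def TSpan (e N : ℕ) : Submodule k ((Fin e → A) → A → A) :=
  Submodule.span k (TSet D e N)

lemma tspan_mono {e N N' : ℕ} (h : N ≤ N') : TSpan (k := k) D e N ≤ TSpan D e N' := by
  apply Submodule.span_mono
  rintro F ⟨ws, v, hb, rfl⟩
  exact ⟨ws, v, hb.trans h, rfl⟩

lemma cons_mem {e M : ℕ} {F : (Fin e → A) → A → A} (hF : F ∈ TSpan (k := k) D e M)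
    (w : List (Fin n)) :
    (fun (a : Fin (e + 1) → A) (b : A) => dword D w (a 0) * F (Fin.tail a) b) ∈
      TSpan (k := k) D (e + 1) (M + w.length) := by
  induction hF using Submodule.span_induction with
  | mem F hFm =>
      obtain ⟨ws, v, hb, rfl⟩ := hFm
      apply Submodule.subset_span
      refine ⟨Fin.cons w ws, v, ?_, ?_⟩
      · rw [Fin.sum_univ_succ]
        simp only [Fin.cons_zero, Fin.cons_succ]
        omega
      · funext a b
        rw [Fin.prod_univ_succ]
        simp only [Fin.cons_zero, Fin.cons_succ, Fin.tail]
        ring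
  | zero =>
      have : (fun (a : Fin (e + 1) → A) (b : A) =>
          dword D w (a 0) * (0 : (Fin e → A) → A → A) (Fin.tail a) b) =
          (0 : (Fin (e + 1) → A) → A → A) := by funext a b; simp
      rw [this]; exact Submodule.zero_mem _
  | add F G hF hG ihF ihG =>
      have : (fun (a : Fin (e + 1) → A) (b : A) => dword D w (a 0) * (F + G) (Fin.tail a) b) =
          (fun (a : Fin (e + 1) → A) (b : A) => dword D w (a 0) * F (Fin.tail a) b) +
          (fun (a : Fin (e + 1) → A) (b : A) => dword D w (a 0) * G (Fin.tail a) b) := by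
        funext a b; simp [mul_add]
      rw [this]; exact Submodule.add_mem _ ihF ihG
  | smul c F hF ihF =>
      have : (fun (a : Fin (e + 1) → A) (b : A) => dword D w (a 0) * (c • F) (Fin.tail a) b) =
          c • fun (a : Fin (e + 1) → A) (b : A) => dword D w (a 0) * F (Fin.tail a) b := by
        funext a b; simp [mul_smul_comm]
      rw [this]; exact Submodule.smul_mem _ _ ihF

lemma deriv_T_mem : ∀ (e : ℕ) (ws : Fin e → List (Fin n)) (v : List (Fin n)) (i : Fin n),
    (fun (a : Fin e → A) (b : A) =>
        D i ((∏ j, dword D (ws j) (a j)) * dword D v b)) ∈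
      TSpan (k := k) D e ((∑ j, (ws j).length) + v.length + 1) := by
  intro e
  induction e with
  | zero =>
      intro ws v i
      apply Submodule.subset_span
      refine ⟨ws, i :: v, by simp, ?_⟩
      funext a b
      simp [dword_cons_apply]
  | succ e ih =>
      intro ws v i
      have key : (fun (a : Fin (e + 1) → A) (b : A) =>
          D i ((∏ j, dword D (ws j) (a j)) * dword D v b)) =
          (fun (a : Fin (e + 1) → A) (b : A) => dword D (ws 0) (a 0) *
            (fun (a' : Fin e → A) (b' : A) =>
              D i ((∏ j, dword D (ws j.succ) (a' j)) * dword D v b')) (Fin.tail a) b) +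
          (fun (a : Fin (e + 1) → A) (b : A) =>
            (∏ j, dword D ((Fin.cons (i :: ws 0) fun j => ws j.succ : Fin (e+1) → List (Fin n)) j) (a j)) *
              dword D v b) := by
        funext a b
        simp only [Pi.add_apply]
        rw [Fin.prod_univ_succ, mul_assoc, Derivation.leibniz, smul_eq_mul, smul_eq_mul]
        rw [Fin.prod_univ_succ]
        simp only [Fin.cons_zero, Fin.cons_succ, Fin.tail, dword_cons_apply]
        ring
      rw [key]
      apply Submodule.add_mem
      · have h1 := cons_mem D (ih (fun j => ws j.succ) v i) (ws 0)
        refine tspan_mono D ?_ h1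
        rw [Fin.sum_univ_succ]
        omega
      · apply Submodule.subset_span
        refine ⟨_, v, ?_, rfl⟩
        rw [Fin.sum_univ_succ]
        simp only [Fin.cons_zero, Fin.cons_succ, List.length_cons]
        rw [Fin.sum_univ_succ]
        omega

lemma deriv_mem {e N : ℕ} {F : (Fin e → A) → A → A} (hF : F ∈ TSpan (k := k) D e N)
    (i : Fin n) :
    (fun (a : Fin e → A) (b : A) => D i (F a b)) ∈ TSpan (k := k) D e (N + 1) := by
  induction hF using Submodule.span_induction with
  | mem F hFm =>
      obtain ⟨ws, v, hb, rfl⟩ := hFm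
      exact tspan_mono D (by omega) (deriv_T_mem D e ws v i)
  | zero =>
      have : (fun (a : Fin e → A) (b : A) => D i ((0 : (Fin e → A) → A → A) a b)) =
          (0 : (Fin e → A) → A → A) := by funext a b; simp
      rw [this]; exact Submodule.zero_mem _
  | add F G hF hG ihF ihG =>
      have : (fun (a : Fin e → A) (b : A) => D i ((F + G) a b)) =
          (fun (a : Fin e → A) (b : A) => D i (F a b)) +
          (fun (a : Fin e → A) (b : A) => D i (G a b)) := by
        funext a b; simp
      rw [this]; exact Submodule.add_mem _ ihF ihG
  | smul c F hF ihF =>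
      have : (fun (a : Fin e → A) (b : A) => D i ((c • F) a b)) =
          c • fun (a : Fin e → A) (b : A) => D i (F a b) := by
        funext a b; simp
      rw [this]; exact Submodule.smul_mem _ _ ihF

lemma dword_F_mem {e N : ℕ} {F : (Fin e → A) → A → A} (hF : F ∈ TSpan (k := k) D e N) :
    ∀ u : List (Fin n),
      (fun (a : Fin e → A) (b : A) => dword D u (F a b)) ∈ TSpan (k := k) D e (N + u.length) := by
  intro u
  induction u with
  | nil => simpa [dword] using hF
  | cons i u ihu =>
      have := deriv_mem D ihu i
      have heq : (fun (a : Fin e → A) (b : A) => dword D (i :: u) (F a b)) =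
          (fun (a : Fin e → A) (b : A) => D i ((fun (a : Fin e → A) (b : A) =>
            dword D u (F a b)) a b)) := by
        funext a b; simp [dword_cons_apply]
      rw [heq]
      exact tspan_mono D (by simp) this

lemma step_mem {e N q1 q2 : ℕ} {F : (Fin e → A) → A → A} (hF : F ∈ TSpan (k := k) D e N)
    {f' g' : Module.End k A}
    (hf' : f' ∈ Submodule.span k (WordsLE D q1)) (hg' : g' ∈ Submodule.span k (WordsLE D q2)) :
    (fun (a : Fin (e + 1) → A) (b : A) => f' (a 0) * g' (F (Fin.tail a) b)) ∈
      TSpan (k := k) D (e + 1) (N + q1 + q2) := by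
  induction hf' using Submodule.span_induction with
  | mem f' hfm =>
      obtain ⟨w, hw, rfl⟩ := hfm
      induction hg' using Submodule.span_induction with
      | mem g' hgm =>
          obtain ⟨v, hv, rfl⟩ := hgm
          have h1 := cons_mem D (dword_F_mem D hF v) w
          refine tspan_mono D (by omega) h1
      | zero =>
          have : (fun (a : Fin (e + 1) → A) (b : A) =>
              dword D w (a 0) * (0 : Module.End k A) (F (Fin.tail a) b)) =
              (0 : (Fin (e + 1) → A) → A → A) := by funext a b; simp
          rw [this]; exact Submodule.zero_mem _
      | add g1 g2 hg1 hg2 ih1 ih2 =>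
          have : (fun (a : Fin (e + 1) → A) (b : A) =>
              dword D w (a 0) * (g1 + g2) (F (Fin.tail a) b)) =
              (fun (a : Fin (e + 1) → A) (b : A) => dword D w (a 0) * g1 (F (Fin.tail a) b)) +
              (fun (a : Fin (e + 1) → A) (b : A) => dword D w (a 0) * g2 (F (Fin.tail a) b)) := by
            funext a b; simp [mul_add]
          rw [this]; exact Submodule.add_mem _ ih1 ih2
      | smul c g1 hg1 ih1 =>
          have : (fun (a : Fin (e + 1) → A) (b : A) =>
              dword D w (a 0) * (c • g1) (F (Fin.tail a) b)) =
              c • fun (a : Fin (e + 1) → A) (b : A) =>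
                dword D w (a 0) * g1 (F (Fin.tail a) b) := by
            funext a b; simp [mul_smul_comm]
          rw [this]; exact Submodule.smul_mem _ _ ih1
  | zero =>
      have : (fun (a : Fin (e + 1) → A) (b : A) =>
          (0 : Module.End k A) (a 0) * g' (F (Fin.tail a) b)) =
          (0 : (Fin (e + 1) → A) → A → A) := by funext a b; simp
      rw [this]; exact Submodule.zero_mem _
  | add f1 f2 hf1 hf2 ih1 ih2 =>
      have : (fun (a : Fin (e + 1) → A) (b : A) =>
          (f1 + f2) (a 0) * g' (F (Fin.tail a) b)) =
          (fun (a : Fin (e + 1) → A) (b : A) => f1 (a 0) * g' (F (Fin.tail a) b)) +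
          (fun (a : Fin (e + 1) → A) (b : A) => f2 (a 0) * g' (F (Fin.tail a) b)) := by
        funext a b; simp [add_mul]
      rw [this]; exact Submodule.add_mem _ ih1 ih2
  | smul c f1 hf1 ih1 =>
      have : (fun (a : Fin (e + 1) → A) (b : A) =>
          (c • f1) (a 0) * g' (F (Fin.tail a) b)) =
          c • fun (a : Fin (e + 1) → A) (b : A) => f1 (a 0) * g' (F (Fin.tail a) b) := by
        funext a b; simp [smul_mul_assoc]
      rw [this]; exact Submodule.smul_mem _ _ ih1


noncomputable def nest (μ : A → A → A) : ∀ e, (Fin e → A) → A → A :=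
  fun _ a b => (List.ofFn a).foldr μ b

lemma nest_mem (μ : A → A → A) (m : ℕ) {s : ℕ} (f g : Fin s → Module.End k A)
    (nf ng : Fin s → ℕ)
    (hf : ∀ j, f j ∈ Submodule.span k (WordsLE D (nf j)))
    (hg : ∀ j, g j ∈ Submodule.span k (WordsLE D (ng j)))
    (horder : ∀ j, nf j + ng j ≤ m)
    (hμ : ∀ a b : A, μ a b = ∑ j, f j a * g j b) :
    ∀ e, nest μ e ∈ TSpan (k := k) D e (e * m) := by
  intro e
  induction e with
  | zero =>
      apply Submodule.subset_span
      refine ⟨fun j => j.elim0, [], by simp, ?_⟩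
      funext a b
      simp [nest]
  | succ e ih =>
      have key : nest μ (e + 1) = ∑ j : Fin s, (fun (a : Fin (e + 1) → A) (b : A) =>
          f j (a 0) * g j (nest μ e (Fin.tail a) b)) := by
        funext a b
        simp only [Finset.sum_apply]
        show (List.ofFn a).foldr μ b = _
        rw [List.ofFn_succ, List.foldr_cons]
        exact hμ _ _
      rw [key]
      apply Submodule.sum_mem
      intro j _
      have hs := step_mem D ih (hf j) (hg j)
      refine tspan_mono D ?_ hs
      have := horder j
      calc e * m + nf j + ng j ≤ e * m + m := by omega
        _ = (e + 1) * m := by ring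

end DerivedOpAux

namespace DerivedOpAux

lemma geom_le {b : ℕ} (hb : 2 ≤ b) (q : ℕ) :
    ∑ j ∈ Finset.range (q + 1), b ^ j ≤ b ^ (q + 1) := by
  induction q with
  | zero => simp; omega
  | succ q ih =>
      rw [Finset.sum_range_succ]
      have h1 : b ^ (q + 1) + b ^ (q + 1) ≤ b ^ (q + 2) := by
        calc b ^ (q + 1) + b ^ (q + 1) = 2 * b ^ (q + 1) := by ring
          _ ≤ b * b ^ (q + 1) := Nat.mul_le_mul_right _ hb
          _ = b ^ (q + 2) := by ring
      linarith

lemma B_lt {b : ℕ} (hb : 2 ≤ b) (m : ℕ) :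
    ∑ l ∈ Finset.range (m + 1), ∑ j ∈ Finset.range (l + 1), b ^ j <
      ∑ j ∈ Finset.range (m + 2), b ^ j := by
  induction m with
  | zero => simp [Finset.sum_range_succ, Finset.sum_range_one]; omega
  | succ m ih =>
      rw [Finset.sum_range_succ]
      have h2 : ∑ j ∈ Finset.range (m + 2), b ^ j ≤ b ^ (m + 2) := geom_le hb (m + 1)
      have h3 : ∑ j ∈ Finset.range (m + 3), b ^ j =
          ∑ j ∈ Finset.range (m + 2), b ^ j + b ^ (m + 2) := Finset.sum_range_succ _ _
      have : (m + 1) + 2 = m + 3 := by omega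
      rw [this]
      linarith

lemma min_card (a m : ℕ) :
    min a (m + 1) = ((Finset.range (m + 1)).filter fun l => l < a).card := by
  have h : ((Finset.range (m + 1)).filter fun l => l < a) = Finset.range (min a (m + 1)) := by
    ext x
    simp only [Finset.mem_filter, Finset.mem_range, lt_min_iff]
    omega
  rw [h, Finset.card_range]

lemma card_filter_len_le {n e : ℕ} (ws : Fin e → List (Fin n))
    (hinj : Function.Injective ws) (l : ℕ) :
    (Finset.univ.filter fun i => (ws i).length ≤ l).card ≤
      ∑ j ∈ Finset.range (l + 1), n ^ j := by
  classical
  set T : Finset (List (Fin n)) :=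
    Finset.image (fun x : Σ j : Fin (l + 1), (Fin (j : ℕ) → Fin n) => List.ofFn x.2)
      Finset.univ with hT
  have hmem : ∀ i ∈ Finset.univ.filter fun i => (ws i).length ≤ l, ws i ∈ T := by
    intro i hi
    rw [Finset.mem_filter] at hi
    rw [hT, Finset.mem_image]
    refine ⟨⟨⟨(ws i).length, by omega⟩, fun t => (ws i).get t⟩, Finset.mem_univ _, ?_⟩
    exact List.ofFn_get _
  have hcard := Finset.card_le_card_of_injOn ws hmem hinj.injOn
  refine hcard.trans ?_
  calc T.card ≤ Fintype.card (Σ j : Fin (l + 1), (Fin (j : ℕ) → Fin n)) := by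
        rw [← Finset.card_univ]; exact Finset.card_image_le
    _ = ∑ j : Fin (l + 1), n ^ (j : ℕ) := by
        simp [Fintype.card_sigma, Fintype.card_fun]
    _ = ∑ j ∈ Finset.range (l + 1), n ^ j := Fin.sum_univ_eq_sum_range _ _

lemma repeat_exists {n : ℕ} (hn : 2 ≤ n) (m p : ℕ) (hp : m + 1 ≤ p)
    {e : ℕ} (he : e = ∑ i ∈ Finset.range (p + 1), n ^ i)
    (ws : Fin e → List (Fin n))
    (hlen : (∑ i, (ws i).length) ≤ e * m) :
    ∃ i j, i ≠ j ∧ ws i = ws j := by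
  classical
  by_contra hcon
  push_neg at hcon
  have hinj : Function.Injective ws := by
    intro i j hij
    by_contra hne
    exact hne (by_contra fun h => (hcon i j h) hij) |>.elim
  have h1 : (∑ i, min (ws i).length (m + 1)) =
      ∑ l ∈ Finset.range (m + 1), (Finset.univ.filter fun i => l < (ws i).length).card := by
    calc (∑ i, min (ws i).length (m + 1))
        = ∑ i, ((Finset.range (m + 1)).filter fun l => l < (ws i).length).card := by
          simp_rw [min_card]
      _ = ∑ i, ∑ l ∈ Finset.range (m + 1), if l < (ws i).length then 1 else 0 := by
          simp_rw [Finset.card_filter]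
      _ = ∑ l ∈ Finset.range (m + 1), ∑ i, if l < (ws i).length then 1 else 0 :=
          Finset.sum_comm
      _ = ∑ l ∈ Finset.range (m + 1), (Finset.univ.filter fun i => l < (ws i).length).card := by
          simp_rw [Finset.card_filter]
  have h2 : ∀ l, (Finset.univ.filter fun i => l < (ws i).length).card +
      (Finset.univ.filter fun i => (ws i).length ≤ l).card = e := by
    intro l
    have := Finset.card_filter_add_card_filter_not
      (s := (Finset.univ : Finset (Fin e))) (p := fun i => l < (ws i).length)
    simpa [not_lt, Finset.card_univ] using this
  have h3 : (∑ l ∈ Finset.range (m + 1), (Finset.univ.filter fun i => l < (ws i).length).card) +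
      (∑ l ∈ Finset.range (m + 1), (Finset.univ.filter fun i => (ws i).length ≤ l).card) =
      (m + 1) * e := by
    rw [← Finset.sum_add_distrib]
    simp [h2, Finset.sum_const, Finset.card_range, mul_comm]
  have h4 : (∑ l ∈ Finset.range (m + 1), (Finset.univ.filter fun i => (ws i).length ≤ l).card) ≤
      ∑ l ∈ Finset.range (m + 1), ∑ j ∈ Finset.range (l + 1), n ^ j :=
    Finset.sum_le_sum fun l _ => card_filter_len_le ws hinj l
  have h5 : (∑ l ∈ Finset.range (m + 1), ∑ j ∈ Finset.range (l + 1), n ^ j) < e := by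
    refine lt_of_lt_of_le (B_lt hn m) ?_
    rw [he]
    refine Finset.sum_le_sum_of_subset ?_
    exact Finset.range_subset_range.2 (by omega)
  have h6 : (∑ i, min (ws i).length (m + 1)) ≤ e * m :=
    le_trans (Finset.sum_le_sum fun i _ => min_le_left _ _) hlen
  rw [h1] at h6
  linarith

end DerivedOpAux


namespace DerivedOpAux

variable {k A : Type*} [Field k] [CommRing A] [Algebra k A]
variable {n : ℕ} (D : Fin n → Derivation k A A)

lemma alt_sum_zero {e : ℕ} (ws : Fin e → List (Fin n)) (v : List (Fin n))
    (i0 i1 : Fin e) (hne : i0 ≠ i1) (heq : ws i0 = ws i1) (a : Fin (e + 1) → A) :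
    ∑ σ : Equiv.Perm (Fin e), (Equiv.Perm.sign σ : ℤ) •
      ((∏ j, dword D (ws j) (a ((σ j).castSucc))) * dword D v (a (Fin.last e))) = 0 := by
  apply Finset.sum_involution (g := fun σ _ => σ * Equiv.swap i0 i1)
  · intro σ _
    have hws : ∀ x, ws (Equiv.swap i0 i1 x) = ws x := by
      intro x
      rcases eq_or_ne x i0 with rfl | h0
      · rw [Equiv.swap_apply_left, heq]
      rcases eq_or_ne x i1 with rfl | h1
      · rw [Equiv.swap_apply_right, heq]
      · rw [Equiv.swap_apply_of_ne_of_ne h0 h1]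
    have hprod : (∏ j, dword D (ws j) (a (((σ * Equiv.swap i0 i1) j).castSucc))) =
        ∏ j, dword D (ws j) (a ((σ j).castSucc)) := by
      refine Fintype.prod_equiv (Equiv.swap i0 i1)
        (fun j => dword D (ws j) (a (((σ * Equiv.swap i0 i1) j).castSucc)))
        (fun j => dword D (ws j) (a ((σ j).castSucc))) ?_
      intro x
      simp only [Equiv.Perm.mul_apply]
      rw [hws x]
    have hsign : (Equiv.Perm.sign (σ * Equiv.swap i0 i1) : ℤ) =
        -(Equiv.Perm.sign σ : ℤ) := by
      rw [Equiv.Perm.sign_mul, Equiv.Perm.sign_swap hne]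
      simp
    rw [hprod, hsign, neg_smul]
    exact add_neg_cancel _
  · intro σ _ _
    intro hcontra
    have hs1 : Equiv.swap i0 i1 = 1 := by
      calc Equiv.swap i0 i1 = σ⁻¹ * (σ * Equiv.swap i0 i1) := by group
        _ = σ⁻¹ * σ := by rw [hcontra]
        _ = 1 := by group
    have h0 : i0 = i1 := by
      have h2 := congrArg (fun (f : Equiv.Perm (Fin e)) => f i0) hs1
      simpa [Equiv.swap_apply_left] using h2.symm
    exact hne h0
  · intro σ _; exact Finset.mem_univ _
  · intro σ _
    rw [mul_assoc, Equiv.swap_mul_self, mul_one]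

end DerivedOpAux


/-- The left standard polynomial of degree `e + 1` associated to a binary operation `μ`:
`s_{d,l}(a₁,…,a_d) = ∑_{σ ∈ S_{d-1}} sgn(σ) μ(a_{σ(1)}, μ(a_{σ(2)}, …, μ(a_{σ(d-1)}, a_d)…))`. -/
noncomputable def stdLeft {A : Type*} [AddCommGroup A] (μ : A → A → A) {e : ℕ}
    (a : Fin (e + 1) → A) : A :=
  ∑ σ : Equiv.Perm (Fin e),
    (Equiv.Perm.sign σ : ℤ) •
      (List.ofFn fun i : Fin e => a ((σ i).castSucc)).foldr μ (a (Fin.last e))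

/-- A derived operation built from `n > 1` derivations, of `D`-order at most `m`,
satisfies the left standard identity of degree `d = 1 + (1 + n + n² + ⋯ + nᵖ)`
for every `p ≥ m + 1`. -/
theorem derived_operation_left_standard_identity
    {k A : Type*} [Field k] [CharZero k] [CommRing A] [Algebra k A]
    {n : ℕ} (hn : 1 < n) (D : Fin n → Derivation k A A)
    (m : ℕ) (μ : A → A → A)
    (s : ℕ) (f g : Fin s → Module.End k A) (nf ng : Fin s → ℕ)
    (hf : ∀ j, f j ∈ (Submodule.span k (insert (1 : Module.End k A)
        (Set.range fun i => (D i : A →ₗ[k] A)))) ^ (nf j))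
    (hg : ∀ j, g j ∈ (Submodule.span k (insert (1 : Module.End k A)
        (Set.range fun i => (D i : A →ₗ[k] A)))) ^ (ng j))
    (horder : ∀ j, nf j + ng j ≤ m)
    (hμ : ∀ a b : A, μ a b = ∑ j, f j a * g j b)
    (p : ℕ) (hp : m + 1 ≤ p)
    (a : Fin ((∑ i ∈ Finset.range (p + 1), n ^ i) + 1) → A) :
    stdLeft μ a = 0 := by
  classical
  open DerivedOpAux in
  have hf' : ∀ j, f j ∈ Submodule.span k (WordsLE D (nf j)) :=
    fun j => DerivedOpAux.pow_le_span D (nf j) (hf j)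
  have hg' : ∀ j, g j ∈ Submodule.span k (WordsLE D (ng j)) :=
    fun j => DerivedOpAux.pow_le_span D (ng j) (hg j)
  have hnest := DerivedOpAux.nest_mem D μ m f g nf ng hf' hg' horder hμ
    (∑ i ∈ Finset.range (p + 1), n ^ i)
  have final : ∀ F ∈ DerivedOpAux.TSpan (k := k) D (∑ i ∈ Finset.range (p + 1), n ^ i)
      ((∑ i ∈ Finset.range (p + 1), n ^ i) * m),
      ∑ σ : Equiv.Perm (Fin (∑ i ∈ Finset.range (p + 1), n ^ i)),
        (Equiv.Perm.sign σ : ℤ) •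
          F (fun i => a ((σ i).castSucc)) (a (Fin.last _)) = 0 := by
    intro F hF
    induction hF using Submodule.span_induction with
    | mem F hFm =>
        obtain ⟨ws, v, hb, rfl⟩ := hFm
        obtain ⟨i0, i1, hne, heq⟩ := DerivedOpAux.repeat_exists (by omega : 2 ≤ n) m p hp rfl ws
          (by omega)
        exact DerivedOpAux.alt_sum_zero D ws v i0 i1 hne heq a
    | zero => simp
    | add F G hF hG ihF ihG =>
        simp only [Pi.add_apply, smul_add, Finset.sum_add_distrib, ihF, ihG, add_zero]
    | smul c F hF ihF =>
        have hc : ∀ σ : Equiv.Perm (Fin (∑ i ∈ Finset.range (p + 1), n ^ i)),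
            (Equiv.Perm.sign σ : ℤ) •
              ((c • F) (fun i => a ((σ i).castSucc)) (a (Fin.last _))) =
            c • ((Equiv.Perm.sign σ : ℤ) •
              (F (fun i => a ((σ i).castSucc)) (a (Fin.last _)))) := by
          intro σ
          rw [Pi.smul_apply, Pi.smul_apply, smul_comm]
        rw [Finset.sum_congr rfl fun σ _ => hc σ, ← Finset.smul_sum, ihF, smul_zero]
  exact final _ hnest
end

section
/- Let k be a field of characteristic zero, A a commutative associative k-algebra, and D_1, …, D_n (with n > 1) derivations of A. Let {−,−} be a derived operation of D-order at most m built from D_1, …, D_n. Then for every integer p ≥ m + 1 and d = 1 + (1 + n + n² + … + n^p), the right standard identity holds: s_{d,r}^{{−,−}}(a_1, …, a_d) = 0 for all a_1, …, a_d ∈ A. -/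
/-- The right standard polynomial of degree `e + 1` associated to a binary operation `μ`:
`s_{d,r}(a₁,…,a_d) = ∑_{σ ∈ S_{d-1}} sgn(σ) μ(μ(…μ(μ(a_d, a_{σ(d-1)}), a_{σ(d-2)})…), a_{σ(1)})`. -/
noncomputable def stdRight {A : Type*} [AddCommGroup A] (μ : A → A → A) {e : ℕ}
    (a : Fin (e + 1) → A) : A :=
  ∑ σ : Equiv.Perm (Fin e),
    (Equiv.Perm.sign σ : ℤ) •
      ((List.ofFn fun i : Fin e => a ((σ i).castSucc)).reverse).foldl μ (a (Fin.last e))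

section Aux

variable {α β M : Type*} [AddCommMonoid M]

lemma sum_flatMap' {α M : Type*} [AddCommMonoid M] (l : List α) (f : α → List M) :
    (l.flatMap f).sum = (l.map fun a => (f a).sum).sum := by
  induction l with
  | nil => simp
  | cons x l ih => simp [List.flatMap_cons, ih]

lemma sum_map_flatMap (l : List α) (f : α → List β) (g : β → M) :
    ((l.flatMap f).map g).sum = (l.map fun a => ((f a).map g).sum).sum := by
  induction l with
  | nil => simp
  | cons x l ih => simp [List.flatMap_cons, ih]

end Aux

section Words

variable {k A : Type*} [CommRing k] [CommRing A] [Algebra k A]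
variable {n : ℕ}

/-- Composition of derivations along a word. -/
def Dw (D : Fin n → Derivation k A A) (w : List (Fin n)) : Module.End k A :=
  (w.map fun i => (D i : Module.End k A)).prod

lemma Dw_nil (D : Fin n → Derivation k A A) : Dw D [] = 1 := rfl

@[simp] lemma Dw_nil_apply (D : Fin n → Derivation k A A) (x : A) : Dw D [] x = x := rfl

lemma Dw_cons (D : Fin n → Derivation k A A) (i : Fin n) (u : List (Fin n)) :
    Dw D (i :: u) = (D i : Module.End k A) * Dw D u := by
  simp [Dw]

lemma Dw_cons_apply (D : Fin n → Derivation k A A) (i : Fin n) (u : List (Fin n)) (x : A) :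
    Dw D (i :: u) x = D i (Dw D u x) := by
  rw [Dw_cons]; rfl

lemma Dw_append_apply (D : Fin n → Derivation k A A) (u v : List (Fin n)) (x : A) :
    Dw D (u ++ v) x = Dw D u (Dw D v x) := by
  unfold Dw; rw [List.map_append, List.prod_append]; rfl

/-- All ways to split a word into two complementary subwords. -/
def splits : List (Fin n) → List (List (Fin n) × List (Fin n))
  | [] => [([], [])]
  | i :: u => (splits u).flatMap fun pq => [(i :: pq.1, pq.2), (pq.1, i :: pq.2)]

lemma splits_length {u : List (Fin n)} :
    ∀ pq ∈ splits u, pq.1.length + pq.2.length = u.length := by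
  induction u with
  | nil => simp [splits]
  | cons i u ih =>
    intro pq hpq
    simp only [splits, List.mem_flatMap] at hpq
    obtain ⟨ab, hab, hmem⟩ := hpq
    have := ih ab hab
    simp only [List.mem_cons, List.mem_singleton] at hmem
    rcases hmem with rfl | rfl | h
    · simp; omega
    · simp; omega
    · exact absurd h List.not_mem_nil

/-- Leibniz rule for a word of derivations applied to a product. -/
lemma Dw_mul (D : Fin n → Derivation k A A) (u : List (Fin n)) (b x : A) :
    Dw D u (b * x) = ((splits u).map fun pq => Dw D pq.1 b * Dw D pq.2 x).sum := by
  induction u generalizing b x with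
  | nil => simp [splits]
  | cons i u ih =>
    rw [Dw_cons_apply, ih, map_list_sum (D i)]
    simp only [splits, List.map_map]
    rw [sum_map_flatMap]
    congr 1
    apply List.map_congr_left
    intro pq _
    simp only [Function.comp_apply, List.map_cons, List.map_nil, List.sum_cons, List.sum_nil,
      add_zero]
    rw [Derivation.leibniz]
    rw [Dw_cons_apply, Dw_cons_apply]
    simp only [smul_eq_mul]
    ring

end Words

section MSplit

variable {k A : Type*} [CommRing k] [CommRing A] [Algebra k A]
variable {n : ℕ}

/-- All ways to distribute the letters of a word over `e` positions plus a tail. -/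
def msplits : List (Fin n) → ℕ → List (List (List (Fin n)) × List (Fin n))
  | u, 0 => [([], u)]
  | u, e+1 => (splits u).flatMap fun pq => (msplits pq.2 e).map fun st => (pq.1 :: st.1, st.2)

lemma msplits_length {e : ℕ} : ∀ {u : List (Fin n)}, ∀ st ∈ msplits u e,
    st.1.length = e ∧ (st.1.map List.length).sum + st.2.length = u.length := by
  induction e with
  | zero => intro u st hst; simp [msplits] at hst; simp [hst]
  | succ e ih =>
    intro u st hst
    simp only [msplits, List.mem_flatMap, List.mem_map] at hst
    obtain ⟨pq, hpq, st', hst', rfl⟩ := hst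
    have h1 := splits_length pq hpq
    have h2 := ih st' hst'
    simp only [List.length_cons, List.map_cons, List.sum_cons]
    omega

/-- The value of one expansion term. -/
def tval (D : Fin n → Derivation k A A) (l : List A) (c : A) (W : List (List (Fin n)))
    (v : List (Fin n)) : A :=
  (List.zipWith (fun w b => Dw D w b) W l).prod * Dw D v c

lemma tval_nil (D : Fin n → Derivation k A A) (c : A) (v : List (Fin n)) :
    tval D [] c [] v = Dw D v c := by
  simp [tval]

lemma tval_cons (D : Fin n → Derivation k A A) (b : A) (l : List A) (c : A)
    (w : List (Fin n)) (W : List (List (Fin n))) (v : List (Fin n)) :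
    tval D (b :: l) c (w :: W) v = Dw D w b * tval D l c W v := by
  simp [tval, mul_assoc]

lemma Dw_tval (D : Fin n → Derivation k A A) (u : List (Fin n)) :
    ∀ (e : ℕ) (W : List (List (Fin n))) (l : List A) (c : A) (v : List (Fin n)),
    W.length = e → l.length = e →
    Dw D u (tval D l c W v)
      = ((msplits u e).map fun st =>
          tval D l c (List.zipWith (· ++ ·) st.1 W) (st.2 ++ v)).sum := by
  intro e
  induction e generalizing u with
  | zero =>
    intro W l c v hW hl
    rw [List.length_eq_zero_iff] at hW hl
    subst hW; subst hl
    simp [msplits, tval, Dw_append_apply]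
  | succ e ih =>
    intro W l c v hW hl
    match W, l with
    | w :: W', b :: l' =>
      simp only [List.length_cons, Nat.succ.injEq] at hW hl
      rw [tval_cons, Dw_mul, msplits]
      rw [sum_map_flatMap]
      congr 1
      apply List.map_congr_left
      intro pq _
      rw [ih pq.2 W' l' c v hW hl, ← List.sum_map_mul_left]
      apply congrArg
      rw [List.map_map]
      apply List.map_congr_left
      intro st _
      simp only [Function.comp_apply]
      rw [List.zipWith_cons_cons, tval_cons, ← Dw_append_apply]

end MSplit

section Span

variable {k A : Type*} [CommRing k] [CommRing A] [Algebra k A]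
variable {n : ℕ}

lemma Dw_append (D : Fin n → Derivation k A A) (u v : List (Fin n)) :
    Dw D (u ++ v) = Dw D u * Dw D v := by
  unfold Dw; rw [List.map_append, List.prod_append]

lemma Dw_singleton (D : Fin n → Derivation k A A) (i : Fin n) :
    Dw D [i] = (D i : Module.End k A) := by
  simp [Dw]

lemma gen_set_eq (D : Fin n → Derivation k A A) :
    insert (1 : Module.End k A) (Set.range fun i => (D i : A →ₗ[k] A))
      = (fun u => Dw D u) '' {u | u.length ≤ 1} := by
  ext T
  constructor
  · rintro (rfl | ⟨i, rfl⟩)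
    · exact ⟨[], by simp, rfl⟩
    · exact ⟨[i], by simp, Dw_singleton D i⟩
  · rintro ⟨u, hu, rfl⟩
    match u with
    | [] => left; rfl
    | [i] => right; exact ⟨i, (Dw_singleton D i).symm⟩
    | x :: y :: u => simp at hu

lemma span_pow_eq (D : Fin n → Derivation k A A) (q : ℕ) :
    (Submodule.span k (insert (1 : Module.End k A)
        (Set.range fun i => (D i : A →ₗ[k] A)))) ^ q
      = Submodule.span k ((fun u => Dw D u) '' {u : List (Fin n) | u.length ≤ q}) := by
  induction q with
  | zero =>
    rw [Submodule.pow_zero]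
    have : {u : List (Fin n) | u.length ≤ 0} = {[]} := by
      ext u; simp [List.length_eq_zero_iff]
    rw [this, Set.image_singleton, Submodule.one_eq_span]
    rfl
  | succ q ih =>
    rw [Submodule.pow_succ, ih, gen_set_eq D, Submodule.span_mul_span]
    have hone : (1 : Module.End k A) ∈ (fun u => Dw D u) '' {u : List (Fin n) | u.length ≤ q} :=
      ⟨[], by simp, rfl⟩
    apply le_antisymm
    · rw [Submodule.span_le]
      rintro x hx
      rw [Set.mem_mul] at hx
      obtain ⟨y, ⟨u, hu, rfl⟩, z, ⟨u', hu', rfl⟩, rfl⟩ := hx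
      apply Submodule.subset_span
      refine ⟨u ++ u', ?_, ?_⟩
      · simp only [Set.mem_setOf_eq, List.length_append] at hu hu' ⊢; omega
      · show Dw D (u ++ u') = Dw D u * Dw D u'
        exact Dw_append D u u'
    · rw [Submodule.span_le]
      rintro x ⟨w, hw, rfl⟩
      apply Submodule.subset_span
      rcases List.eq_nil_or_concat w with rfl | ⟨L, b, rfl⟩
      · show (1 : Module.End k A) ∈ _
        rw [show (1 : Module.End k A) = 1 * 1 from (one_mul 1).symm]
        exact Set.mul_mem_mul hone ⟨[], by simp, rfl⟩
      · show Dw D (L.concat b) ∈ _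
        rw [List.concat_eq_append, Dw_append]
        refine Set.mul_mem_mul ⟨L, ?_, rfl⟩ ⟨[b], by simp, rfl⟩
        simp only [Set.mem_setOf_eq] at hw ⊢
        simp only [List.length_concat] at hw
        omega

lemma repr_of_mem_pow (D : Fin n → Derivation k A A) (q : ℕ) (f : Module.End k A)
    (hf : f ∈ (Submodule.span k (insert (1 : Module.End k A)
        (Set.range fun i => (D i : A →ₗ[k] A)))) ^ q) :
    ∃ dat : List (k × List (Fin n)), (∀ x ∈ dat, x.2.length ≤ q) ∧
      ∀ a : A, f a = (dat.map fun x => x.1 • Dw D x.2 a).sum := by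
  rw [span_pow_eq] at hf
  induction hf using Submodule.span_induction with
  | mem x hx =>
    obtain ⟨u, hu, rfl⟩ := hx
    exact ⟨[(1, u)], by simpa using hu, fun a => by simp⟩
  | zero => exact ⟨[], by simp, fun a => by simp⟩
  | add x y hx hy ihx ihy =>
    obtain ⟨dx, hdx1, hdx2⟩ := ihx
    obtain ⟨dy, hdy1, hdy2⟩ := ihy
    refine ⟨dx ++ dy, ?_, fun a => ?_⟩
    · intro t ht; rcases List.mem_append.mp ht with h | h
      · exact hdx1 t h
      · exact hdy1 t h
    · simp [LinearMap.add_apply, hdx2 a, hdy2 a]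
  | smul r x hx ihx =>
    obtain ⟨dx, hdx1, hdx2⟩ := ihx
    refine ⟨dx.map fun t => (r * t.1, t.2), ?_, fun a => ?_⟩
    · intro t ht
      obtain ⟨t', ht', rfl⟩ := List.mem_map.mp ht
      exact hdx1 t' ht'
    · rw [LinearMap.smul_apply, hdx2 a, List.smul_sum, List.map_map, List.map_map]
      apply congrArg
      apply List.map_congr_left
      intro t _
      simp [mul_smul]

end Span

section Exp

variable {k A : Type*} [CommRing k] [CommRing A] [Algebra k A]
variable {n : ℕ}

lemma sum_mul_sum_list {α β : Type*} (l1 : List α) (l2 : List β) (F : α → A) (G : β → A) :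
    (l1.map F).sum * (l2.map G).sum
      = (l1.flatMap fun x => l2.map fun y => F x * G y).sum := by
  induction l1 with
  | nil => simp
  | cons x l1 ih =>
    simp only [List.map_cons, List.sum_cons, List.flatMap_cons, List.sum_append, add_mul, ih,
      List.sum_map_mul_left]

lemma zip_append_lengths {P W : List (List (Fin n))} (h : P.length = W.length) :
    ((List.zipWith (· ++ ·) P W).map List.length).sum
      = (P.map List.length).sum + (W.map List.length).sum := by
  induction P generalizing W with
  | nil => cases W with
    | nil => simp
    | cons w W => simp at h
  | cons p P ih =>
    cases W with
    | nil => simp at h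
    | cons w W =>
      simp only [List.length_cons, Nat.succ.injEq] at h
      simp only [List.zipWith_cons_cons, List.map_cons, List.sum_cons, List.length_append, ih h]
      omega

/-- The iterated operation `{{…{{c,b_e},b_{e-1}},…},b_1}`. -/
def iterOp (μ : A → A → A) (l : List A) (c : A) : A := l.foldr (fun b r => μ r b) c

lemma mu_norm (D : Fin n → Derivation k A A) (m : ℕ) (μ : A → A → A)
    (s : ℕ) (f g : Fin s → Module.End k A) (nf ng : Fin s → ℕ)
    (hf : ∀ j, f j ∈ (Submodule.span k (insert (1 : Module.End k A)
        (Set.range fun i => (D i : A →ₗ[k] A)))) ^ (nf j))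
    (hg : ∀ j, g j ∈ (Submodule.span k (insert (1 : Module.End k A)
        (Set.range fun i => (D i : A →ₗ[k] A)))) ^ (ng j))
    (horder : ∀ j, nf j + ng j ≤ m)
    (hμ : ∀ a b : A, μ a b = ∑ j, f j a * g j b) :
    ∃ dat : List (k × (List (Fin n) × List (Fin n))),
      (∀ x ∈ dat, x.2.1.length + x.2.2.length ≤ m) ∧
      ∀ a b : A, μ a b = (dat.map fun x => x.1 • (Dw D x.2.1 a * Dw D x.2.2 b)).sum := by
  choose df hdf1 hdf2 using fun j => repr_of_mem_pow D (nf j) (f j) (hf j)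
  choose dg hdg1 hdg2 using fun j => repr_of_mem_pow D (ng j) (g j) (hg j)
  refine ⟨(List.finRange s).flatMap fun j => (df j).flatMap fun xf =>
      (dg j).map fun xg => (xf.1 * xg.1, (xf.2, xg.2)), ?_, ?_⟩
  · intro t ht
    simp only [List.mem_flatMap, List.mem_map] at ht
    obtain ⟨j, _, xf, hxf, xg, hxg, rfl⟩ := ht
    have h1 := hdf1 j xf hxf
    have h2 := hdg1 j xg hxg
    have h3 := horder j
    simp only
    omega
  · intro a b
    rw [hμ a b, ← List.sum_ofFn (f := fun j => f j a * g j b), List.ofFn_eq_map,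
      sum_map_flatMap]
    apply congrArg
    apply List.map_congr_left
    intro j _
    rw [hdf2 j a, hdg2 j b, sum_mul_sum_list, sum_flatMap', sum_map_flatMap]
    apply congrArg
    apply List.map_congr_left
    intro xf _
    rw [List.map_map]
    apply congrArg
    apply List.map_congr_left
    intro xg _
    simp only [Function.comp_apply]
    rw [smul_mul_smul_comm]

end Exp

section ExpMain

variable {k A : Type*} [CommRing k] [CommRing A] [Algebra k A]
variable {n : ℕ}

lemma exp_lemma (D : Fin n → Derivation k A A) (m : ℕ) (μ : A → A → A)
    (dat : List (k × (List (Fin n) × List (Fin n))))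
    (hdat1 : ∀ x ∈ dat, x.2.1.length + x.2.2.length ≤ m)
    (hdat2 : ∀ a b : A, μ a b = (dat.map fun x => x.1 • (Dw D x.2.1 a * Dw D x.2.2 b)).sum)
    (e : ℕ) :
    ∃ terms : List (k × (List (List (Fin n)) × List (Fin n))),
      (∀ x ∈ terms, x.2.1.length = e ∧ (x.2.1.map List.length).sum + x.2.2.length ≤ m * e) ∧
      ∀ (l : List A) (c : A), l.length = e →
        iterOp μ l c = (terms.map fun x => x.1 • tval D l c x.2.1 x.2.2).sum := by
  induction e with
  | zero =>
    refine ⟨[((1 : k), ([], []))], by simp, ?_⟩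
    intro l c hl
    rw [List.length_eq_zero_iff] at hl
    subst hl
    simp [iterOp, tval]
  | succ e ihe =>
    obtain ⟨terms, hcond, hval⟩ := ihe
    refine ⟨dat.flatMap fun y => terms.flatMap fun x => (msplits y.2.1 e).map
        fun st => (y.1 * x.1, (y.2.2 :: List.zipWith (· ++ ·) st.1 x.2.1, st.2 ++ x.2.2)),
      ?_, ?_⟩
    · intro t ht
      simp only [List.mem_flatMap, List.mem_map] at ht
      obtain ⟨y, hy, x, hx, st, hst, rfl⟩ := ht
      obtain ⟨hst1, hst2⟩ := msplits_length st hst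
      obtain ⟨hx1, hx2⟩ := hcond x hx
      have hy' := hdat1 y hy
      have hzl : (List.zipWith (· ++ ·) st.1 x.2.1).length = e := by
        rw [List.length_zipWith]; omega
      have hzs : ((List.zipWith (· ++ ·) st.1 x.2.1).map List.length).sum
          = (st.1.map List.length).sum + (x.2.1.map List.length).sum :=
        zip_append_lengths (by omega)
      refine ⟨by simp [hzl], ?_⟩
      simp only [List.map_cons, List.sum_cons, List.length_append]
      rw [hzs, Nat.mul_succ]
      omega
    · intro l c hl
      cases l with
      | nil => simp at hl
      | cons b l' =>
        have hl' : l'.length = e := by simpa using hl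
        have hstep : iterOp μ (b :: l') c = μ (iterOp μ l' c) b := rfl
        rw [hstep, hdat2 (iterOp μ l' c) b, sum_map_flatMap]
        apply congrArg
        apply List.map_congr_left
        intro y _
        rw [hval l' c hl', map_list_sum (Dw D y.2.1), List.map_map, ← List.sum_map_mul_right,
          List.smul_sum, List.map_map, sum_map_flatMap]
        apply congrArg
        apply List.map_congr_left
        intro x hx
        simp only [Function.comp_apply]
        rw [map_smul, Dw_tval D y.2.1 e x.2.1 l' c x.2.2 (hcond x hx).1 hl',
          smul_mul_assoc, smul_smul, ← List.sum_map_mul_right, List.map_map,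
          List.smul_sum, List.map_map]
        apply congrArg
        apply List.map_congr_left
        intro st _
        simp only [Function.comp_apply]
        rw [tval_cons, mul_comm (Dw D y.2.2 b)]

end ExpMain

section Pigeonhole

/-- The finset of words of length exactly `ℓ`. -/
def wordsExact (n : ℕ) : ℕ → Finset (List (Fin n))
  | 0 => {[]}
  | ℓ+1 => (Finset.univ ×ˢ wordsExact n ℓ).image fun p => p.1 :: p.2

lemma mem_wordsExact {n : ℕ} : ∀ {ℓ : ℕ} {w : List (Fin n)},
    w ∈ wordsExact n ℓ ↔ w.length = ℓ := by
  intro ℓ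
  induction ℓ with
  | zero => intro w; simp [wordsExact, List.length_eq_zero_iff]
  | succ ℓ ih =>
    intro w
    simp only [wordsExact, Finset.mem_image, Finset.mem_product, Finset.mem_univ, true_and,
      Prod.exists]
    constructor
    · rintro ⟨i, u, hu, rfl⟩
      simp [ih.mp hu]
    · intro hw
      cases w with
      | nil => simp at hw
      | cons i u =>
        exact ⟨i, u, ih.mpr (by simpa using hw), rfl⟩

lemma card_wordsExact {n : ℕ} : ∀ ℓ : ℕ, (wordsExact n ℓ).card = n ^ ℓ := by
  intro ℓ
  induction ℓ with
  | zero => simp [wordsExact]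
  | succ ℓ ih =>
    have hinj : Function.Injective (fun p : Fin n × List (Fin n) => p.1 :: p.2) := by
      intro p q h
      simp only [List.cons.injEq] at h
      exact Prod.ext h.1 h.2
    rw [wordsExact, Finset.card_image_of_injective _ hinj, Finset.card_product]
    simp [ih, pow_succ, mul_comm]

/-- `Ncount n L` is the number of words of length at most `L`. -/
def Ncount (n L : ℕ) : ℕ := ∑ ℓ ∈ Finset.range (L+1), n^ℓ

/-- The finset of words of length at most `L`. -/
def wordsLe (n L : ℕ) : Finset (List (Fin n)) :=
  (Finset.range (L+1)).biUnion (wordsExact n)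

lemma mem_wordsLe {n L : ℕ} {w : List (Fin n)} : w ∈ wordsLe n L ↔ w.length ≤ L := by
  simp only [wordsLe, Finset.mem_biUnion, Finset.mem_range, mem_wordsExact]
  constructor
  · rintro ⟨ℓ, hℓ, rfl⟩; omega
  · intro h; exact ⟨w.length, by omega, rfl⟩

lemma card_wordsLe (n L : ℕ) : (wordsLe n L).card = Ncount n L := by
  rw [wordsLe, Finset.card_biUnion]
  · exact Finset.sum_congr rfl fun ℓ _ => card_wordsExact ℓ
  · intro i _ j _ hij
    simp only [Finset.disjoint_left]
    intro w hw hw'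
    rw [mem_wordsExact] at hw hw'
    omega

lemma Ncount_succ (n L : ℕ) : Ncount n (L+1) = Ncount n L + n^(L+1) :=
  Finset.sum_range_succ _ _

lemma Ncount_lt_pow {n : ℕ} (hn : 2 ≤ n) (L : ℕ) : Ncount n L + 1 ≤ n^(L+1) := by
  induction L with
  | zero => simpa [Ncount] using hn
  | succ L ih =>
    have h1 := Ncount_succ n L
    have hpow : n^(L+1) + n^(L+1) ≤ n^(L+1+1) := by
      calc n^(L+1) + n^(L+1) = 2 * n^(L+1) := by ring
        _ ≤ n * n^(L+1) := Nat.mul_le_mul_right _ hn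
        _ = n^(L+1+1) := by ring
    omega

lemma pigeonhole_words_aux {n m e : ℕ} (hn : 2 ≤ n)
    (he : Ncount n (m+1) ≤ e)
    (ws : Fin e → List (Fin n)) (hinj : Function.Injective ws) :
    m * e + 1 ≤ ∑ i, (ws i).length := by
  classical
  have h1 : ∀ L, (Finset.univ.filter fun i => (ws i).length ≤ L).card ≤ Ncount n L := by
    intro L
    rw [← card_wordsLe n L]
    apply Finset.card_le_card_of_injOn ws
    · intro i hi
      simp only [Finset.mem_coe, Finset.mem_filter] at hi
      exact mem_wordsLe.mpr hi.2
    · exact fun i _ j _ h => hinj h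
  have h2 : ∀ L, (Finset.univ.filter fun i => L < (ws i).length).card
      + (Finset.univ.filter fun i => (ws i).length ≤ L).card = e := by
    intro L
    have h := Finset.card_filter_add_card_filter_not
      (s := (Finset.univ : Finset (Fin e))) (p := fun i => L < (ws i).length)
    simp only [Finset.card_univ, Fintype.card_fin] at h
    have hfe : (Finset.univ.filter fun i => (ws i).length ≤ L)
        = (Finset.univ.filter fun a => ¬ L < (ws a).length) := by
      apply Finset.filter_congr
      intro i _
      simp [not_lt]
    rw [hfe]
    exact h
  have h3 : ∑ L ∈ Finset.range (m+1), (Finset.univ.filter fun i => L < (ws i).length).card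
      ≤ ∑ i, (ws i).length := by
    calc ∑ L ∈ Finset.range (m+1), (Finset.univ.filter fun i => L < (ws i).length).card
        = ∑ L ∈ Finset.range (m+1), ∑ i : Fin e, if L < (ws i).length then 1 else 0 :=
          Finset.sum_congr rfl fun L _ => Finset.card_filter _ _
      _ = ∑ i : Fin e, ∑ L ∈ Finset.range (m+1), if L < (ws i).length then 1 else 0 :=
          Finset.sum_comm
      _ ≤ ∑ i, (ws i).length := by
          apply Finset.sum_le_sum
          intro i _
          rw [← Finset.card_filter]
          calc ((Finset.range (m+1)).filter fun L => L < (ws i).length).card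
              ≤ (Finset.range ((ws i).length)).card := by
                apply Finset.card_le_card
                intro L hL
                simp only [Finset.mem_filter, Finset.mem_range] at hL ⊢
                exact hL.2
            _ = (ws i).length := Finset.card_range _
  have hA : (∑ L ∈ Finset.range m, Ncount n L) + m + 1 ≤ Ncount n m := by
    have h0 : ∑ L ∈ Finset.range m, (Ncount n L + 1) ≤ ∑ L ∈ Finset.range m, n^(L+1) :=
      Finset.sum_le_sum fun L _ => Ncount_lt_pow hn L
    have h1' : ∑ L ∈ Finset.range m, (Ncount n L + 1) = (∑ L ∈ Finset.range m, Ncount n L) + m := by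
      rw [Finset.sum_add_distrib]; simp
    have h2' : (∑ L ∈ Finset.range m, n^(L+1)) + 1 = Ncount n m := by
      rw [Ncount, Finset.sum_range_succ' (fun ℓ => n^ℓ) m]
      simp
    omega
  have hB : Ncount n m + 1 ≤ n^(m+1) := Ncount_lt_pow hn m
  have hC : Ncount n m + n^(m+1) ≤ e := le_trans (le_of_eq (Ncount_succ n m).symm) he
  have hsumN : (∑ L ∈ Finset.range (m+1), Ncount n L) + 1 ≤ e := by
    rw [Finset.sum_range_succ]
    omega
  have hS2 : (m+1) * e ≤ (∑ L ∈ Finset.range (m+1),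
      (Finset.univ.filter fun i => L < (ws i).length).card)
      + ∑ L ∈ Finset.range (m+1), Ncount n L := by
    rw [← Finset.sum_add_distrib]
    calc (m+1) * e = ∑ _L ∈ Finset.range (m+1), e := by
          rw [Finset.sum_const, Finset.card_range, smul_eq_mul]
      _ ≤ _ := by
        apply Finset.sum_le_sum
        intro L _
        have hh1 := h1 L
        have hh2 := h2 L
        omega
  have hme : (m+1) * e = m * e + e := by ring
  omega

end Pigeonhole

section Cancel

variable {k A : Type*} [CommRing k] [CommRing A] [Algebra k A]

lemma alt_sum_zero {e : ℕ} (φ : Fin e → Fin e → A) (i₀ i₁ : Fin e) (hne : i₀ ≠ i₁)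
    (hφ : φ i₀ = φ i₁) :
    ∑ σ : Equiv.Perm (Fin e), ((Equiv.Perm.sign σ : ℤ) : k) • ∏ i, φ i (σ i) = 0 := by
  apply Finset.sum_involution (fun σ _ => σ * Equiv.swap i₀ i₁)
  · intro σ _
    have hprod : ∏ i, φ i ((σ * Equiv.swap i₀ i₁) i) = ∏ i, φ i (σ i) := by
      have hpt : ∀ i, φ (Equiv.swap i₀ i₁ i) = φ i := by
        intro i
        rcases eq_or_ne i i₀ with rfl | h0
        · rw [Equiv.swap_apply_left]; exact hφ.symm
        · rcases eq_or_ne i i₁ with rfl | h1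
          · rw [Equiv.swap_apply_right]; exact hφ
          · rw [Equiv.swap_apply_of_ne_of_ne h0 h1]
      calc ∏ i, φ i ((σ * Equiv.swap i₀ i₁) i)
          = ∏ i, φ (Equiv.swap i₀ i₁ i) (σ (Equiv.swap i₀ i₁ i)) := by
            apply Finset.prod_congr rfl
            intro i _
            rw [hpt i]
            rfl
        _ = ∏ i, φ i (σ i) := Equiv.prod_comp (Equiv.swap i₀ i₁) (fun j => φ j (σ j))
    have hsign : Equiv.Perm.sign (σ * Equiv.swap i₀ i₁) = - Equiv.Perm.sign σ := by
      rw [Equiv.Perm.sign_mul, Equiv.Perm.sign_swap hne, mul_neg_one]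
    rw [hprod, hsign]
    push_cast
    rw [neg_smul]
    exact add_neg_cancel _
  · intro σ _ _ hcontra
    have h1 : σ * Equiv.swap i₀ i₁ = σ * 1 := by rw [mul_one]; exact hcontra
    exact hne (Equiv.swap_eq_one_iff.mp (mul_left_cancel h1))
  · intro σ _; exact Finset.mem_univ _
  · intro σ _
    rw [mul_assoc, Equiv.swap_mul_self, mul_one]

variable {n : ℕ}

lemma tval_ofFn (D : Fin n → Derivation k A A) {e : ℕ} (W : List (List (Fin n)))
    (hW : W.length = e) (b : Fin e → A) (c : A) (V : List (Fin n)) :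
    tval D (List.ofFn b) c W V
      = (∏ i : Fin e, Dw D (W.get (Fin.cast hW.symm i)) (b i)) * Dw D V c := by
  unfold tval
  congr 1
  rw [← List.prod_ofFn]
  congr 1
  apply List.ext_getElem
  · simp [hW]
  · intro i h1 h2
    simp only [List.getElem_zipWith, List.getElem_ofFn]
    congr 1

lemma map_length_sum_eq (W : List (List (Fin n))) {e : ℕ} (hW : W.length = e) :
    (W.map List.length).sum = ∑ i : Fin e, (W.get (Fin.cast hW.symm i)).length := by
  conv_lhs => rw [← List.ofFn_get W]
  rw [List.map_ofFn, List.sum_ofFn]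
  exact (Fin.sum_congr' (fun t => (W.get t).length) hW.symm).symm

end Cancel

lemma main_aux {k A : Type*} [CommRing k] [CommRing A] [Algebra k A]
    {n : ℕ} (hn : 1 < n) (D : Fin n → Derivation k A A)
    (m : ℕ) (μ : A → A → A)
    (dat : List (k × (List (Fin n) × List (Fin n))))
    (hdat1 : ∀ x ∈ dat, x.2.1.length + x.2.2.length ≤ m)
    (hdat2 : ∀ a b : A, μ a b = (dat.map fun x => x.1 • (Dw D x.2.1 a * Dw D x.2.2 b)).sum)
    (p : ℕ) (hp : m + 1 ≤ p)
    (e : ℕ) (he : e = ∑ i ∈ Finset.range (p + 1), n ^ i)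
    (a : Fin (e + 1) → A) :
    (∑ σ : Equiv.Perm (Fin e), (Equiv.Perm.sign σ : ℤ) •
      ((List.ofFn fun i : Fin e => a ((σ i).castSucc)).reverse).foldl μ (a (Fin.last e))) = 0 := by
  classical
  obtain ⟨terms, hcond, hval⟩ := exp_lemma D m μ dat hdat1 hdat2 e
  have hlist : ∀ (g' : (k × (List (List (Fin n)) × List (Fin n))) → A),
      (terms.map g').sum = ∑ t : Fin terms.length, g' (terms.get t) := by
    intro g'
    conv_lhs => rw [← List.ofFn_get terms]
    rw [List.map_ofFn, List.sum_ofFn]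
    rfl
  have step1 : ∀ σ : Equiv.Perm (Fin e),
      (Equiv.Perm.sign σ : ℤ) •
        ((List.ofFn fun i : Fin e => a ((σ i).castSucc)).reverse).foldl μ (a (Fin.last e))
      = ∑ t : Fin terms.length, ((Equiv.Perm.sign σ : ℤ) : k) •
          ((terms.get t).1 • tval D (List.ofFn fun i : Fin e => a ((σ i).castSucc))
            (a (Fin.last e)) (terms.get t).2.1 (terms.get t).2.2) := by
    intro σ
    have hfold : ((List.ofFn fun i : Fin e => a ((σ i).castSucc)).reverse).foldl μ
        (a (Fin.last e))
        = iterOp μ (List.ofFn fun i : Fin e => a ((σ i).castSucc)) (a (Fin.last e)) := by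
      rw [List.foldl_reverse]
      rfl
    rw [hfold, hval _ _ List.length_ofFn, hlist, ← Int.cast_smul_eq_zsmul k,
      Finset.smul_sum]
  rw [Finset.sum_congr rfl fun σ _ => step1 σ, Finset.sum_comm]
  apply Finset.sum_eq_zero
  intro t _
  obtain ⟨hWlen, hsum⟩ := hcond (terms.get t) (List.get_mem terms t)
  set x := terms.get t with hx
  set W := x.2.1 with hWdef
  obtain ⟨ws, hwsdef⟩ : ∃ ws : Fin e → List (Fin n),
      ∀ i, ws i = W.get (Fin.cast hWlen.symm i) := ⟨_, fun _ => rfl⟩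
  have hNc : Ncount n (m+1) ≤ e := by
    rw [he, Ncount]
    apply Finset.sum_le_sum_of_subset
    exact Finset.range_subset_range.mpr (by omega)
  have hlensum : ∑ i, (ws i).length ≤ m * e := by
    have h := map_length_sum_eq W hWlen
    have h2 : ∑ i, (ws i).length = ∑ i : Fin e, (W.get (Fin.cast hWlen.symm i)).length :=
      Finset.sum_congr rfl fun i _ => by rw [hwsdef i]
    omega
  have hcol : ∃ i j, ws i = ws j ∧ i ≠ j := by
    by_contra hcontra
    push_neg at hcontra
    have hinj : Function.Injective ws := by
      intro i j hij
      by_contra hne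
      exact hne (hcontra i j hij)
    have := pigeonhole_words_aux (n := n) (m := m) hn hNc ws hinj
    omega
  obtain ⟨i₀, i₁, hws01, hne01⟩ := hcol
  have htv : ∀ σ : Equiv.Perm (Fin e),
      tval D (List.ofFn fun i : Fin e => a ((σ i).castSucc)) (a (Fin.last e)) W x.2.2
        = (∏ i : Fin e, Dw D (ws i) (a ((σ i).castSucc))) * Dw D x.2.2 (a (Fin.last e)) := by
    intro σ
    rw [tval_ofFn D W hWlen]
    congr 1
    exact Finset.prod_congr rfl fun i _ => by rw [hwsdef i]
  have hre : ∀ σ : Equiv.Perm (Fin e),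
      ((Equiv.Perm.sign σ : ℤ) : k) • (x.1 • tval D (List.ofFn fun i : Fin e => a ((σ i).castSucc))
          (a (Fin.last e)) W x.2.2)
        = x.1 • ((((Equiv.Perm.sign σ : ℤ) : k) •
            ∏ i : Fin e, Dw D (ws i) (a ((σ i).castSucc))) * Dw D x.2.2 (a (Fin.last e))) := by
    intro σ
    rw [htv σ, smul_mul_assoc, smul_smul, smul_smul, mul_comm]
  rw [Finset.sum_congr rfl fun σ _ => hre σ, ← Finset.smul_sum, ← Finset.sum_mul]
  have hzero : (∑ σ : Equiv.Perm (Fin e), ((Equiv.Perm.sign σ : ℤ) : k) •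
      ∏ i : Fin e, Dw D (ws i) (a ((σ i).castSucc))) = 0 := by
    have hφ : (fun j : Fin e => Dw D (ws i₀) (a j.castSucc))
        = (fun j : Fin e => Dw D (ws i₁) (a j.castSucc)) := by
      rw [hws01]
    exact alt_sum_zero (fun i j => Dw D (ws i) (a j.castSucc)) i₀ i₁ hne01 hφ
  rw [hzero, zero_mul, smul_zero]

/-- A derived operation built from `n > 1` derivations, of `D`-order at most `m`,
satisfies the right standard identity of degree `d = 1 + (1 + n + n² + ⋯ + nᵖ)`
for every `p ≥ m + 1`. -/
theorem derived_operation_right_standard_identity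
    {k A : Type*} [Field k] [CharZero k] [CommRing A] [Algebra k A]
    {n : ℕ} (hn : 1 < n) (D : Fin n → Derivation k A A)
    (m : ℕ) (μ : A → A → A)
    (s : ℕ) (f g : Fin s → Module.End k A) (nf ng : Fin s → ℕ)
    (hf : ∀ j, f j ∈ (Submodule.span k (insert (1 : Module.End k A)
        (Set.range fun i => (D i : A →ₗ[k] A)))) ^ (nf j))
    (hg : ∀ j, g j ∈ (Submodule.span k (insert (1 : Module.End k A)
        (Set.range fun i => (D i : A →ₗ[k] A)))) ^ (ng j))
    (horder : ∀ j, nf j + ng j ≤ m)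
    (hμ : ∀ a b : A, μ a b = ∑ j, f j a * g j b)
    (p : ℕ) (hp : m + 1 ≤ p)
    (a : Fin ((∑ i ∈ Finset.range (p + 1), n ^ i) + 1) → A) :
    stdRight μ a = 0 := by
  obtain ⟨dat, hdat1, hdat2⟩ := mu_norm D m μ s f g nf ng hf hg horder hμ
  rw [stdRight]
  exact main_aux hn D m μ dat hdat1 hdat2 p hp _ rfl a
end

section
/- Let k be a field of characteristic zero, A a commutative associative k-algebra, and g a finite-dimensional Lie subalgebra of the Lie algebra of derivations of A, with dim g = n. Let {−,−} be a derived operation on A of g-order at most m. Then for every integer p with n·p > m·(n + 1) and d = 1 + C(n + p, n) (a binomial coefficient), the left standard identity holds: s_{d,l}^{{−,−}}(a_1, …, a_d) = 0 for all a_1, …, a_d ∈ A. -/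
open Submodule

section Leib
variable {k A : Type*} [Field k] [CommRing A] [Algebra k A]

lemma derivation_leibniz_pi (D : Derivation k A A) :
    ∀ (r : ℕ) (y : Fin r → A) (z : A),
      D ((∏ i, y i) * z) =
        (∑ i, (∏ j, Function.update y i (D (y i)) j) * z) + (∏ i, y i) * D z := by
  intro r
  induction r with
  | zero => intro y z; simp
  | succ r ih =>
    intro y z
    rw [Fin.prod_univ_succ, mul_assoc, Derivation.leibniz, smul_eq_mul, smul_eq_mul]
    rw [ih (fun i => y i.succ) z]
    rw [Fin.sum_univ_succ]
    have h0 : (∏ j, Function.update y 0 (D (y 0)) j) = D (y 0) * ∏ i : Fin r, y i.succ := by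
      rw [Fin.prod_univ_succ, Function.update_self]
      congr 1
    have hsucc : ∀ i : Fin r, (∏ j, Function.update y i.succ (D (y i.succ)) j)
        = y 0 * ∏ j : Fin r, Function.update (fun j' => y (Fin.succ j')) i (D (y i.succ)) j := by
      intro i
      rw [Fin.prod_univ_succ, Function.update_of_ne (Fin.succ_ne_zero i).symm]
      congr 1
      refine Finset.prod_congr rfl fun j _ => ?_
      rcases eq_or_ne j i with rfl | hji
      · rw [Function.update_self, Function.update_self]
      · rw [Function.update_of_ne hji, Function.update_of_ne (fun h => hji (Fin.succ_injective r h))]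
    rw [h0]
    simp only [hsucc]
    rw [mul_add, Finset.mul_sum]
    simp only [mul_assoc]
    ring
end Leib




section Str
variable {k A : Type*} [Field k] [CommRing A] [Algebra k A]
variable {n : ℕ} (X : Fin n → Derivation k A A)

noncomputable def Wop (l : List (Fin n)) : Module.End k A :=
  (l.map fun i => (X i : A →ₗ[k] A)).prod

@[simp] lemma Wop_nil : Wop X [] = 1 := rfl

lemma Wop_cons (h : Fin n) (t : List (Fin n)) :
    Wop X (h :: t) = (X h : A →ₗ[k] A) * Wop X t := by simp [Wop]

lemma Wop_append (u v : List (Fin n)) : Wop X (u ++ v) = Wop X u * Wop X v := by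
  simp [Wop]

lemma Wop_singleton (i : Fin n) : Wop X [i] = (X i : A →ₗ[k] A) := by simp [Wop]

/-- the coercion from derivations to endomorphisms, as a linear map -/
noncomputable def derToEnd : Derivation k A A →ₗ[k] Module.End k A where
  toFun d := d
  map_add' d₁ d₂ := by ext a; simp
  map_smul' c d := by ext a; simp

@[simp] lemma derToEnd_apply (d : Derivation k A A) : derToEnd (k := k) d = (d : A →ₗ[k] A) := rfl

/-- the span of sorted word operators of length at most `q` -/
noncomputable def SS (q : ℕ) : Submodule k (Module.End k A) :=
  Submodule.span k {T | ∃ w : List (Fin n), w.Pairwise (· ≤ ·) ∧ w.length ≤ q ∧ T = Wop X w}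

lemma SS_mono {q q' : ℕ} (h : q ≤ q') : SS X q ≤ SS X q' := by
  apply Submodule.span_mono
  rintro T ⟨w, hw, hlen, rfl⟩
  exact ⟨w, hw, hlen.trans h, rfl⟩

lemma mem_SS_of_sorted {w : List (Fin n)} (hw : w.Pairwise (· ≤ ·)) {q : ℕ} (h : w.length ≤ q) :
    Wop X w ∈ SS X q :=
  Submodule.subset_span ⟨w, hw, h, rfl⟩

def wt : List (Fin n) → ℕ
  | [] => 0
  | (a :: t) => a.val * (t.length + 1) + wt t

lemma wt_append (u v : List (Fin n)) :
    wt (u ++ v) = wt u + (u.map Fin.val).sum * v.length + wt v := by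
  induction u with
  | nil => simp [wt]
  | cons a t ih => simp [wt, ih]; ring

lemma exists_descent {l : List (Fin n)} (h : ¬ l.Pairwise (· ≤ ·)) :
    ∃ (u : List (Fin n)) (a c : Fin n) (v : List (Fin n)), l = u ++ a :: c :: v ∧ c < a := by
  induction l with
  | nil => exact absurd List.Pairwise.nil h
  | cons x xs ih =>
    by_cases hxs : xs.Pairwise (· ≤ ·)
    · match xs, hxs with
      | [], _ => exact absurd (List.pairwise_singleton _ x) h
      | y :: ys, hys =>
        by_cases hxy : x ≤ y
        · exfalso
          apply h
          rw [List.pairwise_cons]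
          refine ⟨?_, hys⟩
          intro b hb
          rcases List.mem_cons.mp hb with rfl | hb
          · exact hxy
          · exact le_trans hxy ((List.pairwise_cons.mp hys).1 b hb)
        · exact ⟨[], x, y, ys, rfl, lt_of_not_ge hxy⟩
    · obtain ⟨u, a, c, v, hl, hac⟩ := ih hxs
      exact ⟨x :: u, a, c, v, by rw [hl]; rfl, hac⟩

/-- the key rewriting identity for an adjacent descent -/
lemma wop_descent (hbr : ∀ i j : Fin n, ∃ c : Fin n → k,
    (⁅X i, X j⁆ : Derivation k A A) = ∑ l, c l • X l) (u : List (Fin n)) (a c : Fin n) (v : List (Fin n)) :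
    ∃ κ : Fin n → k, Wop X (u ++ a :: c :: v) =
      Wop X (u ++ c :: a :: v) + ∑ i, κ i • Wop X (u ++ i :: v) := by
  obtain ⟨κ, hκ⟩ := hbr a c
  refine ⟨κ, ?_⟩
  have hend : (X a : A →ₗ[k] A) * (X c : A →ₗ[k] A)
      = (X c : A →ₗ[k] A) * (X a : A →ₗ[k] A) + ∑ i, κ i • (X i : A →ₗ[k] A) := by
    have h1 : derToEnd (⁅X a, X c⁆ : Derivation k A A) = ∑ i, κ i • derToEnd (k := k) (X i) := by
      rw [hκ]; simp [map_sum]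
    have h2 : derToEnd (k := k) (⁅X a, X c⁆ : Derivation k A A)
        = (X a : A →ₗ[k] A) * (X c : A →ₗ[k] A) - (X c : A →ₗ[k] A) * (X a : A →ₗ[k] A) := by
      ext x
      simp [Derivation.commutator_apply, Module.End.mul_apply, Ring.lie_def]
    rw [h2] at h1
    simp only [derToEnd_apply] at h1
    linear_combination (norm := module) h1
  calc Wop X (u ++ a :: c :: v)
      = Wop X u * (((X a : A →ₗ[k] A) * (X c : A →ₗ[k] A)) * Wop X v) := by
        rw [Wop_append, Wop_cons, Wop_cons, mul_assoc]
    _ = Wop X u * ((((X c : A →ₗ[k] A) * (X a : A →ₗ[k] A)) + ∑ i, κ i • (X i : A →ₗ[k] A)) * Wop X v) := by rw [hend]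
    _ = Wop X (u ++ c :: a :: v) + ∑ i, κ i • Wop X (u ++ i :: v) := by
        rw [Wop_append, Wop_cons, Wop_cons]
        rw [add_mul, mul_add, Finset.sum_mul, Finset.mul_sum]
        congr 1
        refine Finset.sum_congr rfl fun i _ => ?_
        simp only [Wop_append, Wop_cons, smul_mul_assoc, mul_smul_comm]


lemma wt_swap {a c : Fin n} (hac : c < a) (u v : List (Fin n)) :
    wt (u ++ c :: a :: v) < wt (u ++ a :: c :: v) := by
  rw [wt_append, wt_append]
  have h1 : wt (c :: a :: v) < wt (a :: c :: v) := by
    simp only [wt, List.length_cons]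
    have := hac
    have hlt : c.val < a.val := hac
    nlinarith [hlt]
  have h2 : (List.map Fin.val (u : List (Fin n))).sum * (c :: a :: v).length
      = (List.map Fin.val u).sum * (a :: c :: v).length := by simp
  omega

lemma wt_descent_pos {a c : Fin n} (hac : c < a) (u v : List (Fin n)) :
    0 < wt (u ++ a :: c :: v) := by
  rw [wt_append]
  have : 0 < wt (a :: c :: v) := by
    simp only [wt]
    have hlt : (0:ℕ) < a.val := lt_of_le_of_lt (Nat.zero_le _) hac
    positivity
  omega

theorem wop_straight (hbr : ∀ i j : Fin n, ∃ c : Fin n → k,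
      (⁅X i, X j⁆ : Derivation k A A) = ∑ l, c l • X l) :
    ∀ (s φ : ℕ) (l : List (Fin n)), l.length ≤ s → wt l ≤ φ → Wop X l ∈ SS X l.length := by
  intro s
  induction s with
  | zero =>
    intro φ l hl _
    rw [List.length_eq_zero_iff.mp (Nat.le_zero.mp hl)]
    exact mem_SS_of_sorted X List.Pairwise.nil le_rfl
  | succ s ihs =>
    intro φ
    induction φ with
    | zero =>
      intro l hl hw
      by_cases hsort : l.Pairwise (· ≤ ·)
      · exact mem_SS_of_sorted X hsort le_rfl
      · obtain ⟨u, a, c, v, rfl, hac⟩ := exists_descent hsort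
        exact absurd (Nat.le_zero.mp hw) (Nat.pos_iff_ne_zero.mp (wt_descent_pos hac u v))
    | succ φ ihφ =>
      intro l hl hw
      by_cases hsort : l.Pairwise (· ≤ ·)
      · exact mem_SS_of_sorted X hsort le_rfl
      · obtain ⟨u, a, c, v, rfl, hac⟩ := exists_descent hsort
        obtain ⟨κ, heq⟩ := wop_descent X hbr u a c v
        rw [heq]
        apply add_mem
        · have hlen : (u ++ c :: a :: v).length = (u ++ a :: c :: v).length := by simp
          have hwt : wt (u ++ c :: a :: v) ≤ φ :=
            Nat.lt_succ_iff.mp (lt_of_lt_of_le (wt_swap hac u v) hw)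
          have := ihφ (u ++ c :: a :: v) (hlen ▸ hl) hwt
          rwa [hlen] at this
        · apply sum_mem
          intro i _
          apply smul_mem
          have hlen : (u ++ i :: v).length + 1 = (u ++ a :: c :: v).length := by simp; omega
          have hle : (u ++ i :: v).length ≤ s := by omega
          exact SS_mono X (by omega) (ihs (wt (u ++ i :: v)) (u ++ i :: v) hle le_rfl)

theorem wop_mem_SS (hbr : ∀ i j : Fin n, ∃ c : Fin n → k,
      (⁅X i, X j⁆ : Derivation k A A) = ∑ l, c l • X l) (l : List (Fin n)) :
    Wop X l ∈ SS X l.length :=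
  wop_straight X hbr l.length (wt l) l le_rfl le_rfl

/-- span of arbitrary word operators of length at most `q` -/
noncomputable def WS (q : ℕ) : Submodule k (Module.End k A) :=
  Submodule.span k {T | ∃ l : List (Fin n), l.length ≤ q ∧ T = Wop X l}

lemma WS_le_SS (hbr : ∀ i j : Fin n, ∃ c : Fin n → k,
      (⁅X i, X j⁆ : Derivation k A A) = ∑ l, c l • X l) (q : ℕ) : WS X q ≤ SS X q := by
  rw [WS, Submodule.span_le]
  rintro T ⟨l, hl, rfl⟩
  exact SS_mono X hl (wop_mem_SS X hbr l)

lemma pow_le_WS (S : Set (Module.End k A))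
    (hS : S ⊆ ↑(Submodule.span k (Set.range fun i => (X i : A →ₗ[k] A)))) (q : ℕ) :
    (Submodule.span k (insert 1 S)) ^ q ≤ WS X q := by
  induction q with
  | zero =>
    rw [Submodule.pow_zero, Submodule.one_eq_span, Submodule.span_le, Set.singleton_subset_iff]
    exact Submodule.subset_span ⟨[], by simp, rfl⟩
  | succ q ih =>
    rw [Submodule.pow_succ]
    calc (Submodule.span k (insert 1 S)) ^ q * Submodule.span k (insert 1 S)
        ≤ WS X q * Submodule.span k (insert 1 S) := mul_le_mul' ih le_rfl
      _ ≤ WS X (q + 1) := by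
          rw [WS, Submodule.span_mul_span, Submodule.span_le]
          rintro z ⟨T, hT, y, hy, rfl⟩
          obtain ⟨l, hl, rfl⟩ := hT
          rcases Set.mem_insert_iff.mp hy with rfl | hy
          · exact Submodule.subset_span ⟨l, by omega, by rw [show (fun x1 x2 => x1 * x2) (Wop X l) 1 = Wop X l * 1 from rfl, mul_one]⟩
          · have hy' := hS hy
            have : (LinearMap.mulLeft k (Wop X l)) y ∈
                Submodule.span k ((LinearMap.mulLeft k (Wop X l)) ''
                  (Set.range fun i => (X i : A →ₗ[k] A))) :=
              Submodule.apply_mem_span_image_of_mem_span _ hy'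
            refine Submodule.span_le.mpr ?_ this
            rintro w ⟨_, ⟨i, rfl⟩, rfl⟩
            refine Submodule.subset_span ⟨l ++ [i], by simp; omega, ?_⟩
            rw [Wop_append, Wop_singleton]
            rfl



variable (u : A)

/-- the basic product shape -/
noncomputable def NiceProd {r : ℕ} (g : Fin r → List (Fin n)) (w : List (Fin n)) :
    (Fin r → A) → A :=
  fun b => (∏ i, Wop X (g i) (b i)) * Wop X w u

/-- good functions with budget `B` -/
def GoodSet (r B : ℕ) : Set ((Fin r → A) → A) :=
  {φ | ∃ g : Fin r → List (Fin n), ∃ w : List (Fin n),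
    (∀ i, (g i).Pairwise (· ≤ ·)) ∧ w.Pairwise (· ≤ ·) ∧
    ((∑ i, (g i).length) + w.length ≤ B) ∧ φ = NiceProd X u g w}

lemma GoodSet_mono {r B B' : ℕ} (h : B ≤ B') : GoodSet X u r B ⊆ GoodSet X u r B' := by
  rintro φ ⟨g, w, hg, hw, hb, rfl⟩
  exact ⟨g, w, hg, hw, hb.trans h, rfl⟩

lemma span_GoodSet_mono {r B B' : ℕ} (h : B ≤ B') :
    span k (GoodSet X u r B) ≤ span k (GoodSet X u r B') :=
  Submodule.span_mono (GoodSet_mono X u h)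

/-- substituting an endomorphism into the `i`-th slot, as a linear map -/
noncomputable def slotMap {r : ℕ} (g : Fin r → List (Fin n)) (i : Fin r) (w : List (Fin n)) :
    Module.End k A →ₗ[k] ((Fin r → A) → A) where
  toFun T := fun b =>
    (∏ j, Function.update (fun j' => Wop X (g j') (b j')) i (T (b i)) j) * Wop X w u
  map_add' T₁ T₂ := by
    funext b
    simp only [Pi.add_apply]
    rw [Finset.prod_update_of_mem (Finset.mem_univ i),
      Finset.prod_update_of_mem (Finset.mem_univ i),
      Finset.prod_update_of_mem (Finset.mem_univ i)]
    simp only [LinearMap.add_apply]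
    ring
  map_smul' c T := by
    funext b
    simp only [Pi.smul_apply, RingHom.id_apply]
    rw [Finset.prod_update_of_mem (Finset.mem_univ i),
      Finset.prod_update_of_mem (Finset.mem_univ i)]
    simp only [LinearMap.smul_apply]
    rw [smul_mul_assoc, smul_mul_assoc]

/-- substituting an endomorphism into the `u` slot, as a linear map -/
noncomputable def slotMapW {r : ℕ} (g : Fin r → List (Fin n)) :
    Module.End k A →ₗ[k] ((Fin r → A) → A) where
  toFun T := fun b => (∏ j, Wop X (g j) (b j)) * T u
  map_add' T₁ T₂ := by
    funext b
    simp only [Pi.add_apply, LinearMap.add_apply]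
    ring
  map_smul' c T := by
    funext b
    simp only [Pi.smul_apply, RingHom.id_apply, LinearMap.smul_apply]
    rw [mul_smul_comm]

/-- the slot substitution lemma for a factor slot -/
lemma slot_lemma (hbr : ∀ i j : Fin n, ∃ c : Fin n → k,
      (⁅X i, X j⁆ : Derivation k A A) = ∑ l, c l • X l)
    {r : ℕ} (g : Fin r → List (Fin n)) (i : Fin r) (w l : List (Fin n))
    (hg : ∀ j, j ≠ i → (g j).Pairwise (· ≤ ·)) (hw : w.Pairwise (· ≤ ·)) {B : ℕ}
    (hB : (∑ j, (Function.update g i l j).length) + w.length ≤ B) :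
    (fun b => (∏ j, Function.update (fun j' => Wop X (g j') (b j')) i (Wop X l (b i)) j)
        * Wop X w u) ∈ span k (GoodSet X u r B) := by
  have h1 : Wop X l ∈ SS X l.length := wop_mem_SS X hbr l
  have h2 := Submodule.apply_mem_span_image_of_mem_span (slotMap X u g i w) h1
  refine Submodule.span_le.mpr ?_ h2
  rintro φ ⟨T, ⟨w', hw', hlen', rfl⟩, rfl⟩
  apply Submodule.subset_span
  refine ⟨Function.update g i w', w, ?_, hw, ?_, ?_⟩
  · intro j
    rcases eq_or_ne j i with rfl | hji
    · rw [Function.update_self]; exact hw'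
    · rw [Function.update_of_ne hji]; exact hg j hji
  · refine le_trans ?_ hB
    have : ∀ j, (Function.update g i w' j).length ≤ (Function.update g i l j).length := by
      intro j
      rcases eq_or_ne j i with rfl | hji
      · rw [Function.update_self, Function.update_self]; exact hlen'
      · rw [Function.update_of_ne hji, Function.update_of_ne hji]
    exact Nat.add_le_add_right (Finset.sum_le_sum fun j _ => this j) _
  · funext b
    show (∏ j, Function.update (fun j' => Wop X (g j') (b j')) i (Wop X w' (b i)) j)
        * Wop X w u = _
    unfold NiceProd
    congr 1
    refine Finset.prod_congr rfl fun j _ => ?_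
    rcases eq_or_ne j i with rfl | hji
    · rw [Function.update_self, Function.update_self]
    · rw [Function.update_of_ne hji, Function.update_of_ne hji]

/-- the slot substitution lemma for the `u` slot -/
lemma slotW_lemma (hbr : ∀ i j : Fin n, ∃ c : Fin n → k,
      (⁅X i, X j⁆ : Derivation k A A) = ∑ l, c l • X l)
    {r : ℕ} (g : Fin r → List (Fin n)) (l : List (Fin n))
    (hg : ∀ j, (g j).Pairwise (· ≤ ·)) {B : ℕ}
    (hB : (∑ j, (g j).length) + l.length ≤ B) :
    (fun b => (∏ j, Wop X (g j) (b j)) * Wop X l u) ∈ span k (GoodSet X u r B) := by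
  have h1 : Wop X l ∈ SS X l.length := wop_mem_SS X hbr l
  have h2 := Submodule.apply_mem_span_image_of_mem_span (slotMapW X u g) h1
  refine Submodule.span_le.mpr ?_ h2
  rintro φ ⟨T, ⟨w', hw', hlen', rfl⟩, rfl⟩
  exact Submodule.subset_span ⟨g, w', hg, hw', by omega, rfl⟩


/-- composing with a derivation, as a linear map on the function space -/
noncomputable def dComp (r : ℕ) (h : Fin n) : ((Fin r → A) → A) →ₗ[k] ((Fin r → A) → A) where
  toFun ψ := fun b => X h (ψ b)
  map_add' ψ₁ ψ₂ := by funext b; simp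
  map_smul' c ψ := by funext b; simp

lemma op_deriv (hbr : ∀ i j : Fin n, ∃ c : Fin n → k,
      (⁅X i, X j⁆ : Derivation k A A) = ∑ l, c l • X l) {r B : ℕ} (h : Fin n) {φ : (Fin r → A) → A}
    (hφ : φ ∈ span k (GoodSet X u r B)) :
    (fun b => X h (φ b)) ∈ span k (GoodSet X u r (B + 1)) := by
  have himg := Submodule.apply_mem_span_image_of_mem_span (dComp X r h) hφ
  refine Submodule.span_le.mpr ?_ himg
  rintro ψ ⟨φ', ⟨g, w, hg, hw, hb, rfl⟩, rfl⟩
  have hgw : ∀ (b : Fin r → A) (i : Fin r),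
      X h (Wop X (g i) (b i)) = Wop X (h :: g i) (b i) := by
    intro b i
    rw [Wop_cons]
    rfl
  have hwu : X h (Wop X w u) = Wop X (h :: w) u := by rw [Wop_cons]; rfl
  have hsum : ∀ i : Fin r, (∑ j, (Function.update g i (h :: g i) j).length) =
      (∑ j, (g j).length) + 1 := by
    intro i
    have hcomp : ∀ j, (Function.update g i (h :: g i) j).length
        = Function.update (fun j' => (g j').length) i (h :: g i).length j := by
      intro j
      rcases eq_or_ne j i with rfl | hji
      · simp
      · rw [Function.update_of_ne hji, Function.update_of_ne hji]
    rw [Finset.sum_congr rfl fun j _ => hcomp j,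
      Finset.sum_update_of_mem (Finset.mem_univ i),
      Finset.sum_eq_sum_sdiff_singleton_add (Finset.mem_univ i) (fun j => (g j).length)]
    simp only [List.length_cons]
    omega
  have hkey : (dComp X r h) (NiceProd X u g w) =
      (∑ i : Fin r, fun b => (∏ j, Function.update (fun j' => Wop X (g j') (b j')) i
          (Wop X (h :: g i) (b i)) j) * Wop X w u)
      + fun b => (∏ j, Wop X (g j) (b j)) * Wop X (h :: w) u := by
    funext b
    show X h (NiceProd X u g w b) = _
    unfold NiceProd
    rw [derivation_leibniz_pi (X h) r (fun j => Wop X (g j) (b j)) (Wop X w u)]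
    simp only [Pi.add_apply, Finset.sum_apply]
    congr 1
  rw [hkey]
  apply add_mem
  · apply sum_mem
    intro i _
    apply slot_lemma X u hbr g i w (h :: g i) (fun j _ => hg j) hw
    rw [hsum i]
    omega
  · apply slotW_lemma X u hbr g (h :: w) hg
    simp only [List.length_cons]
    omega

lemma op_word (hbr : ∀ i j : Fin n, ∃ c : Fin n → k,
      (⁅X i, X j⁆ : Derivation k A A) = ∑ l, c l • X l) {r B : ℕ} (l : List (Fin n)) {φ : (Fin r → A) → A}
    (hφ : φ ∈ span k (GoodSet X u r B)) :
    (fun b => Wop X l (φ b)) ∈ span k (GoodSet X u r (B + l.length)) := by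
  induction l generalizing φ with
  | nil =>
    simpa [Wop] using hφ
  | cons h t ih =>
    have h1 := op_deriv X u hbr h (ih hφ)
    have h2 : (fun b => X h ((fun b' => Wop X t (φ b')) b))
        = fun b => Wop X (h :: t) (φ b) := by
      funext b
      rw [Wop_cons]
      rfl
    rw [h2] at h1
    have h3 : B + t.length + 1 = B + (h :: t).length := by
      simp only [List.length_cons]
      omega
    rwa [h3] at h1

/-- evaluation of endomorphisms against a fixed function, as a linear map -/
noncomputable def evalComp (r : ℕ) (φ : (Fin r → A) → A) :
    Module.End k A →ₗ[k] ((Fin r → A) → A) where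
  toFun T := fun b => T (φ b)
  map_add' T₁ T₂ := by funext b; simp
  map_smul' c T := by funext b; simp

lemma op_end (hbr : ∀ i j : Fin n, ∃ c : Fin n → k,
      (⁅X i, X j⁆ : Derivation k A A) = ∑ l, c l • X l) {r B q : ℕ} {T : Module.End k A} (hT : T ∈ WS X q)
    {φ : (Fin r → A) → A} (hφ : φ ∈ span k (GoodSet X u r B)) :
    (fun b => T (φ b)) ∈ span k (GoodSet X u r (B + q)) := by
  have himg := Submodule.apply_mem_span_image_of_mem_span (evalComp r φ) hT
  refine Submodule.span_le.mpr ?_ himg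
  rintro ψ ⟨T', ⟨l, hl, rfl⟩, rfl⟩
  show (fun b => Wop X l (φ b)) ∈ _
  exact span_GoodSet_mono X u (by omega) (op_word X u hbr l hφ)

/-- prepending a factor, as a linear map on the function space -/
noncomputable def consMap (r : ℕ) (w₀ : List (Fin n)) :
    ((Fin r → A) → A) →ₗ[k] ((Fin (r + 1) → A) → A) where
  toFun ψ := fun b => Wop X w₀ (b 0) * ψ (fun i => b i.succ)
  map_add' ψ₁ ψ₂ := by funext b; simp [mul_add]
  map_smul' c ψ := by funext b; simp [mul_smul_comm]

/-- multiplying a fixed function by an endomorphism applied to a new slot -/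
noncomputable def consMapT (r : ℕ) (ψ : (Fin r → A) → A) :
    Module.End k A →ₗ[k] ((Fin (r + 1) → A) → A) where
  toFun T := fun b => T (b 0) * ψ (fun i => b i.succ)
  map_add' T₁ T₂ := by funext b; simp [add_mul]
  map_smul' c T := by funext b; simp [smul_mul_assoc]

lemma op_cons_sorted (hbr : ∀ i j : Fin n, ∃ c : Fin n → k,
      (⁅X i, X j⁆ : Derivation k A A) = ∑ l, c l • X l) {r B : ℕ} (w₀ : List (Fin n)) (hw₀ : w₀.Pairwise (· ≤ ·))
    {ψ : (Fin r → A) → A} (hψ : ψ ∈ span k (GoodSet X u r B)) :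
    (fun b : Fin (r + 1) → A => Wop X w₀ (b 0) * ψ (fun i => b i.succ))
      ∈ span k (GoodSet X u (r + 1) (B + w₀.length)) := by
  have himg := Submodule.apply_mem_span_image_of_mem_span (consMap X r w₀) hψ
  refine Submodule.span_le.mpr ?_ himg
  rintro χ ⟨ψ', ⟨g, w, hg, hw, hb, rfl⟩, rfl⟩
  apply Submodule.subset_span
  refine ⟨Fin.cons w₀ g, w, ?_, hw, ?_, ?_⟩
  · intro i
    refine Fin.cases ?_ ?_ i
    · rw [Fin.cons_zero]; exact hw₀
    · intro i'; rw [Fin.cons_succ]; exact hg i'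
  · rw [Fin.sum_univ_succ]
    simp only [Fin.cons_zero, Fin.cons_succ]
    omega
  · funext b
    show Wop X w₀ (b 0) * NiceProd X u g w (fun i => b i.succ) = _
    unfold NiceProd
    rw [Fin.prod_univ_succ]
    simp only [Fin.cons_zero, Fin.cons_succ]
    rw [mul_assoc]

lemma op_cons (hbr : ∀ i j : Fin n, ∃ c : Fin n → k,
      (⁅X i, X j⁆ : Derivation k A A) = ∑ l, c l • X l) {r B q : ℕ} {T : Module.End k A} (hT : T ∈ SS X q)
    {ψ : (Fin r → A) → A} (hψ : ψ ∈ span k (GoodSet X u r B)) :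
    (fun b : Fin (r + 1) → A => T (b 0) * ψ (fun i => b i.succ))
      ∈ span k (GoodSet X u (r + 1) (B + q)) := by
  have himg := Submodule.apply_mem_span_image_of_mem_span (consMapT r ψ) hT
  refine Submodule.span_le.mpr ?_ himg
  rintro χ ⟨T', ⟨w₀, hw₀, hlen₀, rfl⟩, rfl⟩
  show (fun b : Fin (r + 1) → A => Wop X w₀ (b 0) * ψ (fun i => b i.succ)) ∈ _
  exact span_GoodSet_mono X u (by omega) (op_cons_sorted X u hbr w₀ hw₀ hψ)

/-- the main expansion: the iterated bracket is in the span of good functions -/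
theorem foldr_mem_span (hbr : ∀ i j : Fin n, ∃ c : Fin n → k,
      (⁅X i, X j⁆ : Derivation k A A) = ∑ l, c l • X l)
    (μ : A → A → A) (s : ℕ) (f g : Fin s → Module.End k A) (nf ng : Fin s → ℕ)
    (hfS : ∀ j, f j ∈ SS X (nf j)) (hgS : ∀ j, g j ∈ WS X (ng j)) (m : ℕ)
    (horder : ∀ j, nf j + ng j ≤ m)
    (hμ : ∀ x y : A, μ x y = ∑ j, f j x * g j y) :
    ∀ r : ℕ, (fun b : Fin r → A => (List.ofFn fun i => b i).foldr μ u)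
      ∈ span k (GoodSet X u r (r * m)) := by
  intro r
  induction r with
  | zero =>
    apply Submodule.subset_span
    refine ⟨fun i => i.elim0, [], fun i => i.elim0, List.Pairwise.nil, by simp, ?_⟩
    funext b
    simp [NiceProd, Wop]
  | succ r ih =>
    have hstep : (fun b : Fin (r + 1) → A => (List.ofFn fun i => b i).foldr μ u)
        = ∑ j : Fin s, (fun b : Fin (r + 1) → A => f j (b 0) *
            g j ((fun b' : Fin r → A => (List.ofFn fun i => b' i).foldr μ u)
              (fun i => b i.succ))) := by
      funext b
      rw [List.ofFn_succ, List.foldr_cons, hμ]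
      rw [Finset.sum_apply]
    rw [hstep]
    apply sum_mem
    intro j _
    have h1 : (fun b' : Fin r → A => g j ((fun b'' : Fin r → A =>
        (List.ofFn fun i => b'' i).foldr μ u) b'))
        ∈ span k (GoodSet X u r (r * m + ng j)) := op_end X u hbr (hgS j) ih
    have h2 := op_cons X u hbr (hfS j) h1
    refine span_GoodSet_mono X u ?_ h2
    have h3 := horder j
    have h4 : (r + 1) * m = r * m + m := by ring
    omega

/-- the alternating sum over permutations vanishes when two slot words coincide -/
lemma alt_det_vanish {e : ℕ} (g : Fin e → List (Fin n)) {i j : Fin e} (hne : i ≠ j)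
    (heq : g i = g j) (a : Fin (e + 1) → A) (c : A) :
    ∑ σ : Equiv.Perm (Fin e), (Equiv.Perm.sign σ : ℤ) •
      ((∏ i', Wop X (g i') (a ((σ i').castSucc))) * c) = 0 := by
  classical
  have hfac : ∀ σ : Equiv.Perm (Fin e), (Equiv.Perm.sign σ : ℤ) •
      ((∏ i', Wop X (g i') (a ((σ i').castSucc))) * c)
      = ((Equiv.Perm.sign σ : ℤ) • (∏ i', Wop X (g i') (a ((σ i').castSucc)))) * c :=
    fun σ => (smul_mul_assoc _ _ _).symm
  simp only [hfac]
  rw [← Finset.sum_mul]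
  have hdet : (∑ σ : Equiv.Perm (Fin e), (Equiv.Perm.sign σ : ℤ) •
      (∏ i', Wop X (g i') (a ((σ i').castSucc))))
      = (Matrix.of fun r' c' : Fin e => Wop X (g c') (a (r'.castSucc))).det := by
    rw [Matrix.det_apply]
    refine Finset.sum_congr rfl fun σ _ => ?_
    rw [Units.smul_def]
    rfl
  rw [hdet, Matrix.det_zero_of_column_eq hne ?_, zero_mul]
  intro r'
  simp only [Matrix.of_apply]
  rw [heq]

end Str



section Count
variable {n : ℕ}

lemma card_sorted_le {e : ℕ} (q : ℕ) (g : Fin e → List (Fin n))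
    (hsort : ∀ i, (g i).Pairwise (· ≤ ·)) (hinj : Function.Injective g) :
    (Finset.univ.filter fun i => (g i).length ≤ q).card ≤ (n + q).choose n := by
  classical
  set s := Finset.univ.filter fun i => (g i).length ≤ q with hs
  have hlen : ∀ i : {x // x ∈ s}, (g i.1).length ≤ q := by
    rintro ⟨i, hi⟩
    simpa [hs] using (Finset.mem_filter.mp hi).2
  let F : {x // x ∈ s} → Sym (Fin (n + 1)) q := fun i =>
    ⟨((g i.1).map Fin.castSucc : Multiset (Fin (n + 1)))
        + Multiset.replicate (q - (g i.1).length) (Fin.last n), by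
      have := hlen i
      simp [Multiset.card_replicate]
      omega⟩
  have hF : Function.Injective F := by
    rintro ⟨i, hi⟩ ⟨j, hj⟩ hij
    have hmult : ((g i).map Fin.castSucc : Multiset (Fin (n + 1)))
        + Multiset.replicate (q - (g i).length) (Fin.last n)
        = ((g j).map Fin.castSucc : Multiset (Fin (n + 1)))
        + Multiset.replicate (q - (g j).length) (Fin.last n) := congrArg Sym.toMultiset hij
    have hnotmem : ∀ l : List (Fin n),
        (Fin.last n) ∉ ((l.map Fin.castSucc : List (Fin (n+1))) : Multiset (Fin (n+1))) := by
      intro l hmem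
      rw [Multiset.mem_coe, List.mem_map] at hmem
      obtain ⟨x, _, hx⟩ := hmem
      exact absurd hx (ne_of_lt (Fin.castSucc_lt_last x))
    have hcount := congrArg (Multiset.count (Fin.last n)) hmult
    rw [Multiset.count_add, Multiset.count_add,
      Multiset.count_eq_zero_of_notMem (hnotmem _), Multiset.count_eq_zero_of_notMem (hnotmem _),
      Multiset.count_replicate, Multiset.count_replicate] at hcount
    simp at hcount
    have hli : (g i).length ≤ q := hlen ⟨i, hi⟩
    have hlj : (g j).length ≤ q := hlen ⟨j, hj⟩
    have hlename : (g i).length = (g j).length := by omega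
    have hrep : Multiset.replicate (q - (g i).length) (Fin.last n)
        = Multiset.replicate (q - (g j).length) (Fin.last n) := by rw [hlename]
    rw [hrep] at hmult
    have hmaps := add_right_cancel hmult
    rw [← Multiset.map_coe, ← Multiset.map_coe] at hmaps
    have hco : ((g i : Multiset (Fin n))) = (g j : Multiset (Fin n)) :=
      Multiset.map_injective (Fin.castSucc_injective n) hmaps
    have hperm := Multiset.coe_eq_coe.mp hco
    have := List.Perm.eq_of_pairwise' (hsort i) (hsort j) hperm
    exact Subtype.ext (hinj this)
  have hcard := Fintype.card_le_of_injective F hF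
  rw [Fintype.card_coe] at hcard
  calc s.card ≤ Fintype.card (Sym (Fin (n + 1)) q) := hcard
    _ = (n + q).choose n := by
        rw [Sym.card_sym_eq_multichoose, Nat.multichoose_eq, Fintype.card_fin]
        have h1 : n + 1 + q - 1 = n + q := by omega
        rw [h1]
        rw [← Nat.choose_symm (show q ≤ n + q by omega), show n + q - q = n from by omega]
  
lemma sum_range_choose_hockey (n : ℕ) : ∀ p : ℕ,
    (∑ q ∈ Finset.range p, (n + q).choose n) = (n + p).choose (n + 1)
  | 0 => by simp [Nat.choose_eq_zero_of_lt]
  | (p+1) => by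
      rw [Finset.sum_range_succ, sum_range_choose_hockey n p]
      have : n + (p + 1) = (n + p) + 1 := by omega
      rw [this, Nat.choose_succ_succ' (n + p) n]
      omega

theorem sorted_budget_dup (p m' e : ℕ) (he : e = (n + p).choose n)
    (hp : m' * (n + 1) < n * p)
    (g : Fin e → List (Fin n))
    (hsort : ∀ i, (g i).Pairwise (· ≤ ·))
    (hbud : (∑ i, (g i).length) ≤ e * m') :
    ∃ i j, i ≠ j ∧ g i = g j := by
  classical
  by_contra hcon
  push_neg at hcon
  have hinj : Function.Injective g := by
    intro i j h
    by_contra hne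
    exact hcon i j hne h
  have hepos : 0 < e := he ▸ Nat.choose_pos (by omega)
  -- double counting
  have hdc : (∑ q ∈ Finset.range p, ((Finset.univ : Finset (Fin e)).filter
      fun i => q < (g i).length).card) ≤ ∑ i : Fin e, (g i).length := by
    have h1 : ∀ i : Fin e, ((Finset.range p).filter fun q => q < (g i).length).card
        ≤ (g i).length := by
      intro i
      calc ((Finset.range p).filter fun q => q < (g i).length).card
          ≤ ((Finset.range ((g i).length)).card) := by
            apply Finset.card_le_card
            intro q hq
            simp only [Finset.mem_filter, Finset.mem_range] at hq ⊢
            exact hq.2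
        _ = (g i).length := Finset.card_range _
    calc (∑ q ∈ Finset.range p, ((Finset.univ : Finset (Fin e)).filter
        fun i => q < (g i).length).card)
        = ∑ i : Fin e, ((Finset.range p).filter fun q => q < (g i).length).card := by
          simp only [Finset.card_filter]
          rw [Finset.sum_comm]
      _ ≤ ∑ i : Fin e, (g i).length := Finset.sum_le_sum fun i _ => h1 i
  -- lower bound each term
  have hlow : ∀ q, e - (n + q).choose n ≤ ((Finset.univ : Finset (Fin e)).filter
      fun i => q < (g i).length).card := by
    intro q
    have hsplit := Finset.card_filter_add_card_filter_not
      (s := (Finset.univ : Finset (Fin e))) (p := fun i => (g i).length ≤ q)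
    have hbound := card_sorted_le q g hsort hinj
    have hcards : ((Finset.univ : Finset (Fin e)).filter fun i => ¬ ((g i).length ≤ q)).card
        = ((Finset.univ : Finset (Fin e)).filter fun i => q < (g i).length).card := by
      congr 1
      ext i
      simp only [Finset.mem_filter, Finset.mem_univ, true_and, not_le]
    simp only [Finset.card_univ, Fintype.card_fin] at hsplit
    omega
  have hlow2 : (∑ q ∈ Finset.range p, (e - (n + q).choose n)) ≤ e * m' := by
    calc (∑ q ∈ Finset.range p, (e - (n + q).choose n))
        ≤ ∑ q ∈ Finset.range p, ((Finset.univ : Finset (Fin e)).filter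
            fun i => q < (g i).length).card := Finset.sum_le_sum fun q _ => hlow q
      _ ≤ ∑ i : Fin e, (g i).length := hdc
      _ ≤ e * m' := hbud
  -- compute the left sum
  have hchle : ∀ q, q < p → (n + q).choose n ≤ e := by
    intro q hq
    rw [he]
    exact Nat.choose_le_choose n (by omega)
  have hsum : (∑ q ∈ Finset.range p, (e - (n + q).choose n)) + (n + p).choose (n + 1)
      = p * e := by
    rw [← sum_range_choose_hockey n p, ← Finset.sum_add_distrib]
    have : ∀ q ∈ Finset.range p, (e - (n + q).choose n) + (n + q).choose n = e := by
      intro q hq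
      rw [Finset.mem_range] at hq
      exact Nat.sub_add_cancel (hchle q hq)
    rw [Finset.sum_congr rfl this]
    simp [mul_comm]
  set C' := (n + p).choose (n + 1) with hC'
  have hCid : C' * (n + 1) = e * p := by
    rw [hC', he]
    have := Nat.choose_succ_right_eq (n + p) n
    simpa [show n + p - n = p by omega] using this
  -- final arithmetic
  have hkey : p * e ≤ e * m' + C' := by omega
  have hkey2 : p * e * (n + 1) ≤ (e * m' + C') * (n + 1) :=
    Nat.mul_le_mul_right _ hkey
  have hexp : (e * m' + C') * (n + 1) = e * (m' * (n + 1)) + e * p := by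
    rw [add_mul, hCid]; ring
  have hexp2 : p * e * (n + 1) = e * (n * p) + e * p := by ring
  rw [hexp, hexp2] at hkey2
  have : e * (n * p) ≤ e * (m' * (n + 1)) := by omega
  have hlt : e * (m' * (n + 1)) < e * (n * p) :=
    mul_lt_mul_of_pos_left hp hepos
  omega

end Count


/-- A derived operation of `g`-order at most `m`, for `g` a finite-dimensional Lie
subalgebra of `Der(A)` of dimension `n`, satisfies the left standard identity of degree
`d = 1 + (n+p choose n)` whenever `n·p > m·(n+1)`. -/
theorem derived_operation_left_standard_identity_findim
    {k A : Type*} [Field k] [CharZero k] [CommRing A] [Algebra k A]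
    (L : LieSubalgebra k (Derivation k A A)) [Module.Finite k L]
    {n : ℕ} (hdim : Module.finrank k L = n)
    (m : ℕ) (μ : A → A → A)
    (s : ℕ) (f g : Fin s → Module.End k A) (nf ng : Fin s → ℕ)
    (hf : ∀ j, f j ∈ (Submodule.span k (insert (1 : Module.End k A)
        ((fun d : Derivation k A A => (d : A →ₗ[k] A)) '' (L : Set (Derivation k A A))))) ^ (nf j))
    (hg : ∀ j, g j ∈ (Submodule.span k (insert (1 : Module.End k A)
        ((fun d : Derivation k A A => (d : A →ₗ[k] A)) '' (L : Set (Derivation k A A))))) ^ (ng j))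
    (horder : ∀ j, nf j + ng j ≤ m)
    (hμ : ∀ a b : A, μ a b = ∑ j, f j a * g j b)
    (p : ℕ) (hp : m * (n + 1) < n * p)
    (a : Fin ((n + p).choose n + 1) → A) :
    stdLeft μ a = 0 := by
  classical
  -- set up a basis of L
  let bb : Module.Basis (Fin n) k L := (Module.finBasis k L).reindex (finCongr hdim)
  let X : Fin n → Derivation k A A := fun i => (bb i : Derivation k A A)
  -- every element of L is a combination of the basis derivations
  have hmemL : ∀ d : Derivation k A A, d ∈ L → ∃ c : Fin n → k, d = ∑ l, c l • X l := by
    intro d hd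
    refine ⟨fun l => bb.repr ⟨d, hd⟩ l, ?_⟩
    have h1 : (⟨d, hd⟩ : L) = ∑ l, bb.repr ⟨d, hd⟩ l • bb l := (Module.Basis.sum_repr bb ⟨d, hd⟩).symm
    have h2 := congrArg (fun z : L => (z : Derivation k A A)) h1
    simp only at h2
    calc d = (↑(∑ l, bb.repr ⟨d, hd⟩ l • bb l) : Derivation k A A) := h2
      _ = ∑ l, bb.repr ⟨d, hd⟩ l • X l := by
          rw [AddSubmonoidClass.coe_finset_sum]
          rfl
  -- brackets of basis elements
  have hbr : ∀ i j : Fin n, ∃ c : Fin n → k,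
      (⁅X i, X j⁆ : Derivation k A A) = ∑ l, c l • X l := by
    intro i j
    apply hmemL
    have := L.lie_mem (bb i).2 (bb j).2
    exact this
  -- the generating set is inside the span of the basis endomorphisms
  have hS : ((fun d : Derivation k A A => (d : A →ₗ[k] A)) '' (L : Set (Derivation k A A)))
      ⊆ ↑(Submodule.span k (Set.range fun i => (X i : A →ₗ[k] A))) := by
    rintro T ⟨d, hd, rfl⟩
    obtain ⟨c, hc⟩ := hmemL d hd
    show (d : A →ₗ[k] A) ∈ _
    have : (d : A →ₗ[k] A) = ∑ l, c l • (X l : A →ₗ[k] A) := by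
      rw [hc]
      have := map_sum (derToEnd (k := k) (A := A)) (fun l => c l • X l) Finset.univ
      simp only [map_smul, derToEnd_apply] at this
      exact this
    rw [this]
    exact Submodule.sum_mem _ fun l _ =>
      Submodule.smul_mem _ _ (Submodule.subset_span ⟨l, rfl⟩)
  -- convert hypotheses on f and g
  have hfS : ∀ j, f j ∈ SS X (nf j) := fun j =>
    WS_le_SS X hbr (nf j) (pow_le_WS X _ hS (nf j) (hf j))
  have hgS : ∀ j, g j ∈ WS X (ng j) := fun j => pow_le_WS X _ hS (ng j) (hg j)
  -- main expansion
  have hV := foldr_mem_span X (a (Fin.last ((n + p).choose n))) hbr μ s f g nf ng hfS hgS m horder hμ ((n + p).choose n)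
  -- the alternating evaluation functional
  let Lfun : ((Fin ((n + p).choose n) → A) → A) →ₗ[k] A := {
    toFun := fun Φ => ∑ σ : Equiv.Perm (Fin ((n + p).choose n)),
      (Equiv.Perm.sign σ : ℤ) • Φ (fun i => a ((σ i).castSucc))
    map_add' := by
      intro Φ Ψ
      simp [Pi.add_apply, smul_add, Finset.sum_add_distrib]
    map_smul' := by
      intro c Φ
      simp only [Pi.smul_apply, RingHom.id_apply, Finset.smul_sum]
      refine Finset.sum_congr rfl fun σ _ => ?_
      rw [smul_comm] }
  have hstd : stdLeft μ a = Lfun (fun b : Fin ((n + p).choose n) → A => (List.ofFn fun i => b i).foldr μ (a (Fin.last ((n + p).choose n)))) := rfl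
  rw [hstd]
  -- Lfun vanishes on good functions
  have hker : Submodule.span k (GoodSet X (a (Fin.last ((n + p).choose n))) ((n + p).choose n) (((n + p).choose n) * m)) ≤ LinearMap.ker Lfun := by
    rw [Submodule.span_le]
    rintro φ ⟨gw, w, hgsort, hwsort, hbud, rfl⟩
    rw [SetLike.mem_coe, LinearMap.mem_ker]
    obtain ⟨i, j, hne, heq⟩ := sorted_budget_dup p m ((n + p).choose n) rfl hp gw hgsort (by omega)
    show (∑ σ : Equiv.Perm (Fin ((n + p).choose n)), (Equiv.Perm.sign σ : ℤ) •
      NiceProd X (a (Fin.last ((n + p).choose n))) gw w (fun i' => a ((σ i').castSucc))) = 0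
    have : ∀ σ : Equiv.Perm (Fin ((n + p).choose n)), NiceProd X (a (Fin.last ((n + p).choose n))) gw w (fun i' => a ((σ i').castSucc))
        = (∏ i', Wop X (gw i') (a ((σ i').castSucc))) * Wop X w (a (Fin.last ((n + p).choose n))) := fun σ => rfl
    simp only [this]
    exact alt_det_vanish X gw hne heq a (Wop X w (a (Fin.last ((n + p).choose n))))
  have := hker hV
  rw [LinearMap.mem_ker] at this
  exact this
end

section
/- Let k be a field of characteristic zero, A a commutative associative k-algebra, and D_1, …, D_n derivations of A. Let {−,…,−} be a k-linear operation of arity κ ≥ 2 on A of the form {a_1,…,a_κ} = Σ_{j=1}^s f_j^{(1)}(a_1)·…·f_j^{(κ)}(a_κ), where each f_j^{(i)} lies in the unital subalgebra of End_k(A) generated by D_1, …, D_n. Then there exists d > 0 such that Σ_{σ ∈ S_{(κ−1)d}} sgn(σ) {a_{σ(1)}, …, a_{σ(κ−1)}, {a_{σ(κ)}, …, a_{σ(2κ−2)}, {…, {a_{σ((d−1)(κ−1)+1)}, …, a_{σ(d(κ−1))}, a_{d(κ−1)+1}} …}}} = 0 for all a_1, …, a_{d(κ−1)+1} ∈ A.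 -/
/-- The `d`-fold nested iteration of an `(ℓ+1)`-ary operation `μ`:
`nest μ d a x = μ(a₀, …, a_{ℓ-1}, μ(a_ℓ, …, a_{2ℓ-1}, μ(…, μ(a_{(d-1)ℓ}, …, a_{dℓ-1}, x)…)))`. -/
def nest {A : Type*} {ℓ : ℕ} (μ : (Fin (ℓ + 1) → A) → A) :
    (d : ℕ) → (Fin (ℓ * d) → A) → A → A
  | 0, _, x => x
  | d + 1, a, x =>
      μ (Fin.snoc (fun i : Fin ℓ => a (Fin.cast (by ring) (Fin.castAdd (ℓ * d) i)))
          (nest μ d (fun j : Fin (ℓ * d) => a (Fin.cast (by ring) (Fin.natAdd ℓ j))) x))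

set_option linter.unusedSectionVars false

namespace StdIdAux
set_option linter.unusedSectionVars false

variable {k A : Type*} [Field k] [CharZero k] [CommRing A] [Algebra k A]
variable {n : ℕ} (D : Fin n → Derivation k A A)

/-- Composition of derivations indexed by a list. -/
def word (L : List (Fin n)) : Module.End k A :=
  (L.map fun t => ((D t : A →ₗ[k] A) : Module.End k A)).prod

@[simp] theorem word_nil : word D ([] : List (Fin n)) = 1 := rfl

@[simp] theorem word_cons (t : Fin n) (L : List (Fin n)) :
    word D (t :: L) = ((D t : A →ₗ[k] A) : Module.End k A) * word D L := by
  simp [word]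

theorem word_cons_apply (t : Fin n) (L : List (Fin n)) (y : A) :
    word D (t :: L) y = D t (word D L y) := by
  simp [word_cons, Module.End.mul_apply]

/-- Words of length at most `c`. -/
def wordsLE (c : ℕ) : Set (Module.End k A) :=
  {E | ∃ L : List (Fin n), L.length ≤ c ∧ word D L = E}

theorem wordsLE_mono {c c' : ℕ} (h : c ≤ c') : wordsLE D c ⊆ wordsLE D c' := by
  rintro E ⟨L, hL, rfl⟩; exact ⟨L, hL.trans h, rfl⟩

/-- Generators: products of words applied to the slots, times a word applied to the
extra argument, with total `b`-slot word length at most `c`. -/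
def gens (m c : ℕ) : Set ((Fin m → A) → A → A) :=
  {F | ∃ (Lb : Fin m → List (Fin n)) (Lx : List (Fin n)),
      (∑ i, (Lb i).length) ≤ c ∧
      F = fun b x => (∏ i, word D (Lb i) (b i)) * word D Lx x}

theorem gens_mono {m c c' : ℕ} (h : c ≤ c') : gens D m c ⊆ gens D m c' := by
  rintro F ⟨Lb, Lx, hlen, rfl⟩; exact ⟨Lb, Lx, hlen.trans h, rfl⟩

theorem exists_words (E : Module.End k A)
    (hE : E ∈ Algebra.adjoin k (Set.range fun t => ((D t : A →ₗ[k] A) : Module.End k A))) :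
    ∃ c, E ∈ Submodule.span k (wordsLE D c) := by
  classical
  set S : Set (Module.End k A) :=
    Set.range fun t => ((D t : A →ₗ[k] A) : Module.End k A) with hS
  have h1 : E ∈ Submodule.span k ((Submonoid.closure S : Submonoid (Module.End k A)) : Set _) := by
    have := Algebra.adjoin_eq_span (R := k) (s := S)
    have hE' : E ∈ Subalgebra.toSubmodule (Algebra.adjoin k S) := hE
    rwa [this] at hE'
  have hlist : ∀ l : List (Module.End k A), (∀ y ∈ l, y ∈ S) →
      ∃ L : List (Fin n), word D L = l.prod := by
    intro l
    induction l with
    | nil => intro _; exact ⟨[], by simp⟩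
    | cons y l ih =>
      intro hyl
      obtain ⟨t, ht⟩ := hyl y (by simp)
      obtain ⟨L, hL⟩ := ih fun z hz => hyl z (by simp [hz])
      exact ⟨t :: L, by simp [word_cons, hL, ht]⟩
  have h2 : ((Submonoid.closure S : Submonoid (Module.End k A)) : Set _) ⊆
      Set.range (word D) := by
    intro y hy
    obtain ⟨l, hl, rfl⟩ := Submonoid.exists_list_of_mem_closure hy
    obtain ⟨L, hL⟩ := hlist l hl
    exact ⟨L, hL⟩
  have h3 : E ∈ Submodule.span k (Set.range (word D)) :=
    Submodule.span_mono h2 h1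
  obtain ⟨m, co, g, hsum⟩ := Submodule.mem_span_set'.1 h3
  choose L hL using fun i => (g i).2
  refine ⟨Finset.univ.sup fun i => (L i).length, ?_⟩
  rw [← hsum]
  refine Submodule.sum_mem _ fun i _ => Submodule.smul_mem _ _ (Submodule.subset_span ?_)
  exact ⟨L i, Finset.le_sup (f := fun i => (L i).length) (Finset.mem_univ i), hL i⟩

theorem deriv_finset_prod (t : Fin n) {ι : Type*} [DecidableEq ι] (s : Finset ι) (p : ι → A) :
    D t (∏ i ∈ s, p i) = ∑ j ∈ s, D t (p j) * ∏ i ∈ s.erase j, p i := by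
  classical
  induction s using Finset.induction_on with
  | empty => simp
  | @insert a s ha ih =>
    rw [Finset.prod_insert ha, Derivation.leibniz, smul_eq_mul, smul_eq_mul, ih,
      Finset.sum_insert ha, Finset.erase_insert ha, Finset.mul_sum]
    rw [add_comm]
    congr 1
    · ring
    · apply Finset.sum_congr rfl
      intro j hj
      have hja : j ≠ a := fun h => ha (h ▸ hj)
      rw [Finset.erase_insert_of_ne (Ne.symm hja),
        Finset.prod_insert (fun h => ha (Finset.mem_of_mem_erase h))]
      ring


open Submodule in
theorem span_deriv (t : Fin n) {m c : ℕ} {F : (Fin m → A) → A → A}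
    (hF : F ∈ Submodule.span k (gens D m c)) :
    (fun b x => D t (F b x)) ∈ Submodule.span k (gens D m (c + 1)) := by
  classical
  induction hF using Submodule.span_induction with
  | mem F hFm =>
    obtain ⟨Lb, Lx, hlen, rfl⟩ := hFm
    have key : (fun (b : Fin m → A) (x : A) =>
          D t ((∏ i, word D (Lb i) (b i)) * word D Lx x))
        = (fun b x => (∏ i, word D (Lb i) (b i)) * word D (t :: Lx) x)
          + ∑ j : Fin m, fun b x =>
              (∏ i, word D (Function.update Lb j (t :: Lb j) i) (b i)) * word D Lx x := by
      funext b x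
      have hupdate : ∀ (j i : Fin m),
          word D (Function.update Lb j (t :: Lb j) i) (b i)
            = Function.update (fun i => word D (Lb i) (b i)) j
                (D t (word D (Lb j) (b j))) i := by
        intro j i
        by_cases hij : i = j
        · subst hij; simp [Function.update_self, word_cons_apply]
        · simp [Function.update_of_ne hij]
      have hprod : ∀ j : Fin m,
          (∏ i, word D (Function.update Lb j (t :: Lb j) i) (b i))
            = D t (word D (Lb j) (b j)) * ∏ i ∈ Finset.univ.erase j, word D (Lb i) (b i) := by
        intro j
        simp only [hupdate j]
        rw [Finset.prod_update_of_mem (Finset.mem_univ j), ← Finset.erase_eq]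
      simp only [Pi.add_apply, Finset.sum_apply]
      rw [Derivation.leibniz, smul_eq_mul, smul_eq_mul, deriv_finset_prod, Finset.mul_sum]
      rw [word_cons_apply]
      congr 1
      apply Finset.sum_congr rfl
      intro j _
      rw [hprod j]
      ring
    rw [key]
    refine add_mem (subset_span ⟨Lb, t :: Lx, hlen.trans (Nat.le_succ c), rfl⟩) ?_
    refine sum_mem fun j _ => subset_span ⟨Function.update Lb j (t :: Lb j), Lx, ?_, rfl⟩
    have h1 : (∑ i, (Function.update Lb j (t :: Lb j) i).length)
        = ∑ i, Function.update (fun i => (Lb i).length) j ((Lb j).length + 1) i := by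
      apply Finset.sum_congr rfl
      intro i _
      by_cases hij : i = j
      · subst hij; simp
      · simp [Function.update_of_ne hij]
    have h2 : (Lb j).length + ∑ i ∈ Finset.univ.erase j, (Lb i).length
        = ∑ i, (Lb i).length :=
      Finset.add_sum_erase Finset.univ (fun i => (Lb i).length) (Finset.mem_univ j)
    rw [h1, Finset.sum_update_of_mem (Finset.mem_univ j), ← Finset.erase_eq]
    omega
  | zero =>
    have : (fun (b : Fin m → A) (x : A) => D t ((0 : (Fin m → A) → A → A) b x)) = 0 := by
      funext b x; simp
    rw [this]; exact zero_mem _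
  | add F G _ _ ihF ihG =>
    have : (fun (b : Fin m → A) (x : A) => D t ((F + G) b x))
        = (fun b x => D t (F b x)) + fun b x => D t (G b x) := by
      funext b x; simp
    rw [this]; exact add_mem ihF ihG
  | smul r F _ ihF =>
    have : (fun (b : Fin m → A) (x : A) => D t ((r • F) b x))
        = r • fun b x => D t (F b x) := by
      funext b x; simp
    rw [this]; exact smul_mem _ _ ihF


theorem span_word (K : List (Fin n)) {m c : ℕ} {F : (Fin m → A) → A → A}
    (hF : F ∈ Submodule.span k (gens D m c)) :
    (fun b x => word D K (F b x)) ∈ Submodule.span k (gens D m (c + K.length)) := by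
  induction K with
  | nil => simpa using hF
  | cons t K ih =>
    have h := span_deriv D t ih
    have heq : (fun (b : Fin m → A) (x : A) => word D (t :: K) (F b x))
        = fun b x => D t ((fun b x => word D K (F b x)) b x) := by
      funext b x; rw [word_cons_apply]
    rw [heq]
    exact h

theorem span_reindex {m m' : ℕ} (e : Fin m' ≃ Fin m) {c : ℕ} {F : (Fin m → A) → A → A}
    (hF : F ∈ Submodule.span k (gens D m c)) :
    (fun (b : Fin m' → A) x => F (fun i => b (e.symm i)) x)
      ∈ Submodule.span k (gens D m' c) := by
  induction hF using Submodule.span_induction with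
  | mem F hFm =>
    obtain ⟨Lb, Lx, hlen, rfl⟩ := hFm
    refine Submodule.subset_span ⟨fun u => Lb (e u), Lx, ?_, ?_⟩
    · rw [Equiv.sum_comp e (fun i => (Lb i).length)]; exact hlen
    · funext b x
      show (∏ i, word D (Lb i) (b (e.symm i))) * word D Lx x
          = (∏ i, word D (Lb (e i)) (b i)) * word D Lx x
      congr 1
      have := Equiv.prod_comp e.symm (fun u : Fin m' => word D (Lb (e u)) (b u))
      simp only [Equiv.apply_symm_apply] at this
      exact this
  | zero =>
    have : (fun (b : Fin m' → A) (x : A) => (0 : (Fin m → A) → A → A) (fun i => b (e.symm i)) x)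
        = 0 := rfl
    rw [this]; exact zero_mem _
  | add F G _ _ ihF ihG => exact Submodule.add_mem _ ihF ihG
  | smul r F _ ihF => exact Submodule.smul_mem _ _ ihF

theorem span_consword (K : List (Fin n)) {m c : ℕ} {F : (Fin m → A) → A → A}
    (hF : F ∈ Submodule.span k (gens D m c)) :
    (fun (b : Fin (m + 1) → A) x => word D K (b 0) * F (fun i => b i.succ) x)
      ∈ Submodule.span k (gens D (m + 1) (c + K.length)) := by
  induction hF using Submodule.span_induction with
  | mem F hFm =>
    obtain ⟨Lb, Lx, hlen, rfl⟩ := hFm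
    refine Submodule.subset_span ⟨Fin.cons K Lb, Lx, ?_, ?_⟩
    · rw [Fin.sum_univ_succ]
      simp only [Fin.cons_zero, Fin.cons_succ]
      omega
    · funext b x
      rw [Fin.prod_univ_succ]
      simp only [Fin.cons_zero, Fin.cons_succ]
      ring
  | zero =>
    have : (fun (b : Fin (m + 1) → A) (x : A) =>
        word D K (b 0) * (0 : (Fin m → A) → A → A) (fun i => b i.succ) x) = 0 := by
      funext b x; simp
    rw [this]; exact zero_mem _
  | add F G _ _ ihF ihG =>
    have : (fun (b : Fin (m + 1) → A) (x : A) =>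
          word D K (b 0) * (F + G) (fun i => b i.succ) x)
        = (fun b x => word D K (b 0) * F (fun i => b i.succ) x)
          + fun b x => word D K (b 0) * G (fun i => b i.succ) x := by
      funext b x; simp [mul_add]
    rw [this]; exact Submodule.add_mem _ ihF ihG
  | smul r F _ ihF =>
    have : (fun (b : Fin (m + 1) → A) (x : A) =>
          word D K (b 0) * (r • F) (fun i => b i.succ) x)
        = r • fun b x => word D K (b 0) * F (fun i => b i.succ) x := by
      funext b x; simp [mul_smul_comm]
    rw [this]; exact Submodule.smul_mem _ _ ihF

theorem span_consfactor {N' : ℕ} {g : Module.End k A}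
    (hg : g ∈ Submodule.span k (wordsLE D N')) {m c : ℕ} {F : (Fin m → A) → A → A}
    (hF : F ∈ Submodule.span k (gens D m c)) :
    (fun (b : Fin (m + 1) → A) x => g (b 0) * F (fun i => b i.succ) x)
      ∈ Submodule.span k (gens D (m + 1) (c + N')) := by
  induction hg using Submodule.span_induction with
  | mem g hgm =>
    obtain ⟨K, hK, rfl⟩ := hgm
    exact Submodule.span_mono (gens_mono D (by omega)) (span_consword D K hF)
  | zero =>
    have : (fun (b : Fin (m + 1) → A) (x : A) =>
        (0 : Module.End k A) (b 0) * F (fun i => b i.succ) x) = 0 := by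
      funext b x; simp
    rw [this]; exact zero_mem _
  | add g g' _ _ ihg ihg' =>
    have : (fun (b : Fin (m + 1) → A) (x : A) => (g + g') (b 0) * F (fun i => b i.succ) x)
        = (fun b x => g (b 0) * F (fun i => b i.succ) x)
          + fun b x => g' (b 0) * F (fun i => b i.succ) x := by
      funext b x; simp [add_mul]
    rw [this]; exact Submodule.add_mem _ ihg ihg'
  | smul r g _ ihg =>
    have : (fun (b : Fin (m + 1) → A) (x : A) => (r • g) (b 0) * F (fun i => b i.succ) x)
        = r • fun b x => g (b 0) * F (fun i => b i.succ) x := by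
      funext b x; simp [smul_mul_assoc]
    rw [this]; exact Submodule.smul_mem _ _ ihg


theorem span_outer (N' : ℕ) (q : ℕ) :
    ∀ (G : Fin q → Module.End k A), (∀ i, G i ∈ Submodule.span k (wordsLE D N')) →
    ∀ {m c : ℕ} {F : (Fin m → A) → A → A}, F ∈ Submodule.span k (gens D m c) →
    (fun (b : Fin (q + m) → A) x =>
        (∏ i, G i (b (Fin.castAdd m i))) * F (fun u => b (Fin.natAdd q u)) x)
      ∈ Submodule.span k (gens D (q + m) (c + q * N')) := by
  induction q with
  | zero =>
    intro G hG m c F hF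
    have h := span_reindex D (finCongr (Nat.zero_add m)) hF
    have heq : (fun (b : Fin (0 + m) → A) (x : A) =>
          (∏ i, G i (b (Fin.castAdd m i))) * F (fun u => b (Fin.natAdd 0 u)) x)
        = fun (b : Fin (0 + m) → A) x =>
            F (fun i => b ((finCongr (Nat.zero_add m)).symm i)) x := by
      funext b x
      rw [Fin.prod_univ_zero, one_mul]
      congr 1
      funext u
      congr 1
      ext
      simp
    rw [heq]
    exact Submodule.span_mono (gens_mono D (by omega)) h
  | succ q ih =>
    intro G hG m c F hF
    have hq := ih (fun i => G i.succ) (fun i => hG i.succ) hF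
    have hcons := span_consfactor D (hG 0) hq
    have hre := span_reindex D (finCongr (show q + 1 + m = q + m + 1 by omega)) hcons
    refine Submodule.span_mono
      (gens_mono D (show c + q * N' + N' ≤ c + (q + 1) * N' by ring_nf; omega)) ?_
    set e := finCongr (show q + 1 + m = q + m + 1 by omega) with he
    have e0 : e.symm (0 : Fin (q + m + 1)) = Fin.castAdd m (0 : Fin (q + 1)) := by
      ext; simp [he]
    have e1 : ∀ i : Fin q, e.symm (Fin.castAdd m i).succ = Fin.castAdd m i.succ := by
      intro i; ext; simp [he]
    have e2 : ∀ u : Fin m, e.symm (Fin.natAdd q u).succ = Fin.natAdd (q + 1) u := by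
      intro u; ext; simp [he]; omega
    have heq : (fun (b : Fin (q + 1 + m) → A) (x : A) =>
          (∏ i, G i (b (Fin.castAdd m i))) * F (fun u => b (Fin.natAdd (q + 1) u)) x)
        = fun (b : Fin (q + 1 + m) → A) x =>
            G 0 ((fun i => b (e.symm i)) 0)
              * ((∏ i, G i.succ ((fun i' => b (e.symm i'.succ)) (Fin.castAdd m i)))
                * F (fun u => (fun i' => b (e.symm i'.succ)) (Fin.natAdd q u)) x) := by
      funext b x
      simp only [e0, e1, e2]
      rw [Fin.prod_univ_succ, mul_assoc]
    rw [heq]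
    exact hre


theorem span_apply_inner {N' : ℕ} {g : Module.End k A}
    (hg : g ∈ Submodule.span k (wordsLE D N')) {m c : ℕ} {F : (Fin m → A) → A → A}
    (hF : F ∈ Submodule.span k (gens D m c)) :
    (fun b x => g (F b x)) ∈ Submodule.span k (gens D m (c + N')) := by
  induction hg using Submodule.span_induction with
  | mem g hgm =>
    obtain ⟨K, hK, rfl⟩ := hgm
    exact Submodule.span_mono (gens_mono D (by omega)) (span_word D K hF)
  | zero =>
    have : (fun (b : Fin m → A) (x : A) => (0 : Module.End k A) (F b x)) = 0 := by
      funext b x; simp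
    rw [this]; exact zero_mem _
  | add g g' _ _ ihg ihg' =>
    have : (fun (b : Fin m → A) (x : A) => (g + g') (F b x))
        = (fun b x => g (F b x)) + fun b x => g' (F b x) := by
      funext b x; simp
    rw [this]; exact Submodule.add_mem _ ihg ihg'
  | smul r g _ ihg =>
    have : (fun (b : Fin m → A) (x : A) => (r • g) (F b x))
        = r • fun b x => g (F b x) := by
      funext b x; simp
    rw [this]; exact Submodule.smul_mem _ _ ihg

theorem nest_mem {ℓ : ℕ} (μ : (Fin (ℓ + 1) → A) → A) {s : ℕ}
    (f : Fin s → Fin (ℓ + 1) → Module.End k A) {N' : ℕ}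
    (hfN : ∀ j i, f j i ∈ Submodule.span k (wordsLE D N'))
    (hμ : ∀ a : Fin (ℓ + 1) → A, μ a = ∑ j, ∏ i, f j i (a i)) :
    ∀ d : ℕ, nest μ d ∈ Submodule.span k (gens D (ℓ * d) ((ℓ + 1) * N' * d)) := by
  intro d
  induction d with
  | zero =>
    apply Submodule.subset_span
    refine ⟨fun _ => [], [], by simp, ?_⟩
    funext b x
    show x = _
    simp
  | succ d ih =>
    have hnest : nest μ (d + 1) = fun (a : Fin (ℓ * (d + 1)) → A) (x : A) =>
        ∑ j, (∏ i : Fin ℓ, f j i.castSucc (a (Fin.cast (by ring) (Fin.castAdd (ℓ * d) i))))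
          * f j (Fin.last ℓ)
              (nest μ d (fun u => a (Fin.cast (by ring) (Fin.natAdd ℓ u))) x) := by
      funext a x
      show μ _ = _
      rw [hμ]
      apply Finset.sum_congr rfl
      intro j _
      rw [Fin.prod_univ_castSucc]
      simp only [Fin.snoc_castSucc, Fin.snoc_last]
    rw [hnest]
    have hsplit : (fun (a : Fin (ℓ * (d + 1)) → A) (x : A) =>
          ∑ j, (∏ i : Fin ℓ, f j i.castSucc (a (Fin.cast (by ring) (Fin.castAdd (ℓ * d) i))))
            * f j (Fin.last ℓ)
                (nest μ d (fun u => a (Fin.cast (by ring) (Fin.natAdd ℓ u))) x))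
        = ∑ j : Fin s, fun (a : Fin (ℓ * (d + 1)) → A) (x : A) =>
            (∏ i : Fin ℓ, f j i.castSucc (a (Fin.cast (by ring) (Fin.castAdd (ℓ * d) i))))
              * f j (Fin.last ℓ)
                  (nest μ d (fun u => a (Fin.cast (by ring) (Fin.natAdd ℓ u))) x) := by
      funext a x
      simp
    rw [hsplit]
    refine Submodule.sum_mem _ fun j _ => ?_
    have hinner := span_apply_inner D (hfN j (Fin.last ℓ)) ih
    have houter := span_outer D N' ℓ (fun i => f j i.castSucc)
      (fun i => hfN j i.castSucc) hinner
    have hre := span_reindex D (finCongr (show ℓ * (d + 1) = ℓ + ℓ * d by ring)) houter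
    refine Submodule.span_mono (gens_mono D
      (le_of_eq (show (ℓ + 1) * N' * d + N' + ℓ * N' = (ℓ + 1) * N' * (d + 1) by ring))) ?_
    exact hre


theorem counting {n' ℓ B : ℕ} (hl : 1 ≤ ℓ) (d : ℕ)
    (hd : d = (2 * B + 1) * (n' + 1) ^ (2 * B + 1) + 1)
    (Lb : Fin (ℓ * d) → List (Fin n')) (hlen : (∑ i, (Lb i).length) ≤ B * d) :
    ¬ Function.Injective Lb := by
  classical
  intro hinj
  set W := (n' + 1) ^ (2 * B + 1) with hW
  set T : Finset (Fin (ℓ * d)) := Finset.univ.filter (fun i => (Lb i).length ≤ 2 * B) with hT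
  have hcardT : T.card ≤ W := by
    have hmap : ∀ i ∈ T, (fun r : Fin (2 * B + 1) => (Lb i)[(r : ℕ)]?)
        ∈ (Finset.univ : Finset (Fin (2 * B + 1) → Option (Fin n'))) :=
      fun _ _ => Finset.mem_univ _
    have hinj2 : Set.InjOn (fun i => fun r : Fin (2 * B + 1) => (Lb i)[(r : ℕ)]?) T := by
      intro i hi i' hi' hee
      apply hinj
      apply List.ext_getElem?
      intro r
      by_cases hr : r < 2 * B + 1
      · exact congrFun hee ⟨r, hr⟩
      · have hi3 : (Lb i).length ≤ 2 * B := by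
          simpa [hT] using hi
        have hi4 : (Lb i').length ≤ 2 * B := by
          simpa [hT] using hi'
        rw [List.getElem?_eq_none (by omega), List.getElem?_eq_none (by omega)]
    calc T.card ≤ (Finset.univ : Finset (Fin (2 * B + 1) → Option (Fin n'))).card :=
          Finset.card_le_card_of_injOn _ hmap hinj2
      _ = W := by
          simp [hW]
  have hbig : ∀ i ∈ Tᶜ, 2 * B + 1 ≤ (Lb i).length := by
    intro i hi
    have : ¬ ((Lb i).length ≤ 2 * B) := by
      simpa [hT] using hi
    omega
  have h2 : Tᶜ.card * (2 * B + 1) ≤ ∑ i ∈ Tᶜ, (Lb i).length := by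
    simpa using Finset.card_nsmul_le_sum Tᶜ (fun i => (Lb i).length) (2 * B + 1) hbig
  have h3 : (∑ i ∈ Tᶜ, (Lb i).length) ≤ ∑ i, (Lb i).length :=
    Finset.sum_le_sum_of_subset (Finset.subset_univ _)
  have h4 : T.card + Tᶜ.card = ℓ * d := by
    rw [Finset.card_add_card_compl]; simp
  have h5 : d ≤ ℓ * d := Nat.le_mul_of_pos_left d (by omega)
  -- arithmetic contradiction
  have hx : d ≤ W + Tᶜ.card := by omega
  have hA : (2 * B + 1) * d ≤ (2 * B + 1) * (W + Tᶜ.card) := Nat.mul_le_mul_left _ hx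
  have hB : Tᶜ.card * (2 * B + 1) ≤ B * d := le_trans h2 (le_trans h3 hlen)
  have hexp : (2 * B + 1) * (W + Tᶜ.card) = (2 * B + 1) * W + Tᶜ.card * (2 * B + 1) := by ring
  have hC : (B + 1) * d ≤ (2 * B + 1) * d := Nat.mul_le_mul_right d (by omega)
  have hD : (B + 1) * d = B * d + d := by ring
  have key : B * d + d ≤ (2 * B + 1) * W + B * d := by
    rw [← hD]
    exact le_trans hC (le_trans hA (le_trans (le_of_eq hexp) (by omega)))
  have hdd : d = (2 * B + 1) * W + 1 := hd
  obtain ⟨u, hu⟩ : ∃ u, (2 * B + 1) * W = u := ⟨_, rfl⟩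
  obtain ⟨v, hv⟩ : ∃ v, B * d = v := ⟨_, rfl⟩
  rw [hu, hv] at key
  rw [hu] at hdd
  omega

end StdIdAux

open StdIdAux

/-- Any multilinear operation of arity `κ = ℓ + 1 ≥ 2` on a commutative algebra `A`
built from derivations `D₁, …, Dₙ` (a higher-arity derived operation) satisfies a
standard identity: there is `d > 0` such that the full antisymmetrization over the
first `(κ-1)·d` arguments of the `d`-fold left-nested iteration vanishes. -/
theorem higher_derived_operation_standard_identity
    {k A : Type*} [Field k] [CharZero k] [CommRing A] [Algebra k A]
    {n : ℕ} (D : Fin n → Derivation k A A)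
    {ℓ : ℕ} (hl : 1 ≤ ℓ) (μ : (Fin (ℓ + 1) → A) → A)
    (s : ℕ) (f : Fin s → Fin (ℓ + 1) → Module.End k A)
    (hf : ∀ j i, f j i ∈ Algebra.adjoin k (Set.range fun t => ((D t : A →ₗ[k] A) : Module.End k A)))
    (hμ : ∀ a : Fin (ℓ + 1) → A, μ a = ∑ j, ∏ i, f j i (a i)) :
    ∃ d : ℕ, 0 < d ∧ ∀ a : Fin (ℓ * d + 1) → A,
      ∑ σ : Equiv.Perm (Fin (ℓ * d)),
        (Equiv.Perm.sign σ : ℤ) •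
          nest μ d (fun i : Fin (ℓ * d) => a ((σ i).castSucc)) (a (Fin.last (ℓ * d))) = 0 := by
  classical
  have hN : ∀ j i, ∃ c, f j i ∈ Submodule.span k (wordsLE D c) :=
    fun j i => exists_words D _ (hf j i)
  choose Nf hNf using hN
  set N' := Finset.univ.sup (fun p : Fin s × Fin (ℓ + 1) => Nf p.1 p.2) with hN'
  have hfN : ∀ j i, f j i ∈ Submodule.span k (wordsLE D N') := fun j i =>
    Submodule.span_mono (wordsLE_mono D
      (Finset.le_sup (f := fun p : Fin s × Fin (ℓ + 1) => Nf p.1 p.2)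
        (Finset.mem_univ (j, i)))) (hNf j i)
  set B := (ℓ + 1) * N' with hB
  set d := (2 * B + 1) * (n + 1) ^ (2 * B + 1) + 1 with hd
  refine ⟨d, Nat.succ_pos _, ?_⟩
  intro a
  have hmem := nest_mem D μ f hfN hμ d
  have main : ∀ F, F ∈ Submodule.span k (gens D (ℓ * d) ((ℓ + 1) * N' * d)) →
      (∑ σ : Equiv.Perm (Fin (ℓ * d)),
        (Equiv.Perm.sign σ : ℤ) •
          F (fun i : Fin (ℓ * d) => a ((σ i).castSucc)) (a (Fin.last (ℓ * d)))) = 0 := by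
    intro F hFmem
    induction hFmem using Submodule.span_induction with
      | mem F hFm =>
        obtain ⟨Lb, Lx, hlen, rfl⟩ := hFm
        have hni : ¬ Function.Injective Lb :=
          counting hl d hd Lb (by rw [hB] at *; exact hlen)
        obtain ⟨i1, i2, hLeq, hne⟩ := Function.not_injective_iff.1 hni
        set τ := Equiv.swap i1 i2 with hτ
        have hLbτ : ∀ i, Lb (τ i) = Lb i := by
          intro i
          by_cases h1 : i = i1
          · subst h1; simp [hτ, Equiv.swap_apply_left, hLeq.symm]
          · by_cases h2 : i = i2
            · subst h2; simp [hτ, Equiv.swap_apply_right, hLeq]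
            · simp [hτ, Equiv.swap_apply_of_ne_of_ne h1 h2]
        have hInv : ∀ b : Fin (ℓ * d) → A,
            (∏ i, word D (Lb i) (b (τ i))) = ∏ i, word D (Lb i) (b i) := by
          intro b
          calc (∏ i, word D (Lb i) (b (τ i)))
              = ∏ i, word D (Lb (τ i)) (b (τ i)) := by
                apply Finset.prod_congr rfl
                intro i _
                rw [hLbτ]
            _ = ∏ i, word D (Lb i) (b i) :=
                Equiv.prod_comp τ (fun i => word D (Lb i) (b i))
        set g : Equiv.Perm (Fin (ℓ * d)) → A := fun σ =>
          (Equiv.Perm.sign σ : ℤ) •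
            ((fun b x => (∏ i, word D (Lb i) (b i)) * word D Lx x)
              (fun i : Fin (ℓ * d) => a ((σ i).castSucc)) (a (Fin.last (ℓ * d)))) with hg
        show (∑ σ, g σ) = 0
        have hgτ : ∀ σ, g (σ * τ) = - g σ := by
          intro σ
          have hsgn : (Equiv.Perm.sign (σ * τ) : ℤ) = -(Equiv.Perm.sign σ : ℤ) := by
            rw [Equiv.Perm.sign_mul, Equiv.Perm.sign_swap hne]
            simp
          have hval : (∏ i, word D (Lb i) (a (((σ * τ) i).castSucc)))
              = ∏ i, word D (Lb i) (a ((σ i).castSucc)) := by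
            have := hInv (fun i => a ((σ i).castSucc))
            simpa [Equiv.Perm.mul_apply] using this
          simp only [hg, hsgn, hval, neg_smul]
        have hsum : (∑ σ, g σ) = ∑ σ, g (σ * τ) := by
          have := Equiv.sum_comp (Equiv.mulRight τ) g
          simp only [Equiv.coe_mulRight] at this
          exact this.symm
        have hneg : (∑ σ : Equiv.Perm (Fin (ℓ * d)), g σ)
            = - ∑ σ : Equiv.Perm (Fin (ℓ * d)), g σ := by
          calc (∑ σ : Equiv.Perm (Fin (ℓ * d)), g σ)
              = ∑ σ : Equiv.Perm (Fin (ℓ * d)), g (σ * τ) := hsum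
            _ = ∑ σ : Equiv.Perm (Fin (ℓ * d)), - g σ := by
                apply Finset.sum_congr rfl
                intro σ _
                exact hgτ σ
            _ = - ∑ σ : Equiv.Perm (Fin (ℓ * d)), g σ := by
                rw [Finset.sum_neg_distrib]
        have hSS : (∑ σ, g σ) + (∑ σ, g σ) = 0 :=
          eq_neg_iff_add_eq_zero.mp hneg
        have h2S : (2 : k) • (∑ σ, g σ) = 0 := by
          rw [two_smul]; exact hSS
        have := congrArg (fun y => (2 : k)⁻¹ • y) h2S
        simpa [smul_smul, inv_mul_cancel₀ (two_ne_zero' k)] using this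
      | zero => simp
      | add F G _ _ ihF ihG =>
        have : ∀ σ : Equiv.Perm (Fin (ℓ * d)),
            (Equiv.Perm.sign σ : ℤ) •
              ((F + G) (fun i : Fin (ℓ * d) => a ((σ i).castSucc)) (a (Fin.last (ℓ * d))))
            = (Equiv.Perm.sign σ : ℤ) •
                (F (fun i : Fin (ℓ * d) => a ((σ i).castSucc)) (a (Fin.last (ℓ * d))))
              + (Equiv.Perm.sign σ : ℤ) •
                (G (fun i : Fin (ℓ * d) => a ((σ i).castSucc)) (a (Fin.last (ℓ * d)))) := by
          intro σ; simp [smul_add]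
        rw [Finset.sum_congr rfl fun σ _ => this σ, Finset.sum_add_distrib, ihF, ihG, add_zero]
      | smul r F _ ihF =>
        have : ∀ σ : Equiv.Perm (Fin (ℓ * d)),
            (Equiv.Perm.sign σ : ℤ) •
              ((r • F) (fun i : Fin (ℓ * d) => a ((σ i).castSucc)) (a (Fin.last (ℓ * d))))
            = r • ((Equiv.Perm.sign σ : ℤ) •
                (F (fun i : Fin (ℓ * d) => a ((σ i).castSucc)) (a (Fin.last (ℓ * d))))) := by
          intro σ
          simp [smul_comm]
        rw [Finset.sum_congr rfl fun σ _ => this σ, ← Finset.smul_sum, ihF, smul_zero]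

  exact main _ hmem
end

section
/- Let N be a module over a field of characteristic zero equipped with a bilinear operation ∘ satisfying the Novikov identities (a∘b)∘c − a∘(b∘c) = (b∘a)∘c − b∘(a∘c) and (a∘b)∘c = (a∘c)∘b for all a, b, c ∈ N. Then the left standard identity of degree 4 holds: s_{4,l}^{∘}(a_1, a_2, a_3, a_4) = Σ_{σ ∈ S_3} sgn(σ) a_{σ(1)} ∘ (a_{σ(2)} ∘ (a_{σ(3)} ∘ a_4)) = 0 for all a_1, a_2, a_3, a_4 ∈ N. -/
def eperm : Fin 6 → Equiv.Perm (Fin 3) :=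
  ![1, Equiv.swap 0 1, Equiv.swap 0 2, Equiv.swap 1 2,
    Equiv.swap 0 1 * Equiv.swap 1 2, Equiv.swap 0 1 * Equiv.swap 0 2]

lemma foldr_eval {A : Type*} [AddCommGroup A] (μ : A → A → A) (a : Fin 4 → A)
    (σ : Equiv.Perm (Fin 3)) :
    (List.ofFn fun i : Fin 3 => a ((σ i).castSucc)).foldr μ (a (Fin.last 3)) =
      μ (a ((σ 0).castSucc)) (μ (a ((σ 1).castSucc)) (μ (a ((σ 2).castSucc)) (a 3))) := rfl

lemma stdLeft_three {A : Type*} [AddCommGroup A] (μ : A → A → A) (a : Fin 4 → A) :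
    stdLeft μ a =
      μ (a 0) (μ (a 1) (μ (a 2) (a 3))) - μ (a 1) (μ (a 0) (μ (a 2) (a 3)))
      - μ (a 2) (μ (a 1) (μ (a 0) (a 3))) - μ (a 0) (μ (a 2) (μ (a 1) (a 3)))
      + μ (a 1) (μ (a 2) (μ (a 0) (a 3))) + μ (a 2) (μ (a 0) (μ (a 1) (a 3))) := by
  rw [stdLeft,
    ← Fintype.sum_bijective eperm (by decide) _ _ (fun x => rfl), Fin.sum_univ_six]
  rw [foldr_eval, foldr_eval, foldr_eval, foldr_eval, foldr_eval, foldr_eval]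
  rw [show ((eperm 0 0).castSucc : Fin 4) = 0 from rfl,
      show ((eperm 0 1).castSucc : Fin 4) = 1 from rfl,
      show ((eperm 0 2).castSucc : Fin 4) = 2 from rfl,
      show ((eperm 1 0).castSucc : Fin 4) = 1 from rfl,
      show ((eperm 1 1).castSucc : Fin 4) = 0 from rfl,
      show ((eperm 1 2).castSucc : Fin 4) = 2 from rfl,
      show ((eperm 2 0).castSucc : Fin 4) = 2 from rfl,
      show ((eperm 2 1).castSucc : Fin 4) = 1 from rfl,
      show ((eperm 2 2).castSucc : Fin 4) = 0 from rfl,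
      show ((eperm 3 0).castSucc : Fin 4) = 0 from rfl,
      show ((eperm 3 1).castSucc : Fin 4) = 2 from rfl,
      show ((eperm 3 2).castSucc : Fin 4) = 1 from rfl,
      show ((eperm 4 0).castSucc : Fin 4) = 1 from rfl,
      show ((eperm 4 1).castSucc : Fin 4) = 2 from rfl,
      show ((eperm 4 2).castSucc : Fin 4) = 0 from rfl,
      show ((eperm 5 0).castSucc : Fin 4) = 2 from rfl,
      show ((eperm 5 1).castSucc : Fin 4) = 0 from rfl,
      show ((eperm 5 2).castSucc : Fin 4) = 1 from rfl,
      show ((Equiv.Perm.sign (eperm 0)) : ℤ) = 1 by decide,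
      show ((Equiv.Perm.sign (eperm 1)) : ℤ) = -1 by decide,
      show ((Equiv.Perm.sign (eperm 2)) : ℤ) = -1 by decide,
      show ((Equiv.Perm.sign (eperm 3)) : ℤ) = -1 by decide,
      show ((Equiv.Perm.sign (eperm 4)) : ℤ) = 1 by decide,
      show ((Equiv.Perm.sign (eperm 5)) : ℤ) = 1 by decide]
  simp only [one_smul, neg_smul, neg_one_smul]
  abel

/-- Every Novikov algebra over a field of characteristic zero satisfies the left
standard identity of degree 4. -/
theorem novikov_left_standard_identity_deg4
    {k N : Type*} [Field k] [CharZero k] [AddCommGroup N] [Module k N]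
    (mul : N →ₗ[k] N →ₗ[k] N)
    (hNov1 : ∀ a b c : N,
      mul (mul a b) c - mul a (mul b c) = mul (mul b a) c - mul b (mul a c))
    (hNov2 : ∀ a b c : N, mul (mul a b) c = mul (mul a c) b)
    (a : Fin (3 + 1) → N) :
    stdLeft (fun x y => mul x y) a = 0 := by
  have h1R : ∀ x y z w : N, mul (mul (mul x y) z) w - mul (mul x (mul y z)) w
      = mul (mul (mul y x) z) w - mul (mul y (mul x z)) w := by
    intro x y z w
    have := congrArg (fun t => mul t w) (hNov1 x y z)
    simpa [map_sub] using this
  have h2R : ∀ x y z w : N, mul (mul (mul x y) z) w = mul (mul (mul x z) y) w := by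
    intro x y z w; exact congrArg (fun t => mul t w) (hNov2 x y z)
  have h2L : ∀ x y z w : N, mul w (mul (mul x y) z) = mul w (mul (mul x z) y) := by
    intro x y z w; exact congrArg (fun t => mul w t) (hNov2 x y z)
  rw [stdLeft_three]
  linear_combination (norm := abel)
      - (hNov1 (mul (a 0) (a 1)) (a 2) (a 3))
      + (2:ℤ) • (hNov2 (mul (a 0) (a 1)) (a 2) (a 3))
      + (hNov2 (mul (a 0) (a 3)) (a 1) (a 2))
      + (hNov1 (mul (a 0) (a 3)) (a 2) (a 1))
      + (hNov1 (mul (a 1) (a 0)) (a 2) (a 3))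
      - (2:ℤ) • (hNov2 (mul (a 1) (a 0)) (a 2) (a 3))
      - (hNov2 (mul (a 1) (a 3)) (a 0) (a 2))
      - (hNov1 (mul (a 1) (a 3)) (a 2) (a 0))
      + (hNov2 (a 0) (mul (a 1) (a 3)) (a 2))
      - (hNov2 (a 0) (mul (a 2) (a 1)) (a 3))
      - (hNov2 (a 1) (mul (a 0) (a 3)) (a 2))
      + (hNov2 (a 1) (mul (a 2) (a 0)) (a 3))
      + (hNov2 (a 2) (mul (a 0) (a 3)) (a 1))
      - (hNov2 (a 2) (mul (a 1) (a 3)) (a 0))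
      - (hNov1 (a 0) (a 1) (mul (a 2) (a 3)))
      + (hNov1 (a 0) (a 2) (mul (a 1) (a 3)))
      - (hNov1 (a 1) (a 2) (mul (a 0) (a 3)))
      - (h2R (a 0) (a 1) (a 2) (a 3))
      + (h1R (a 0) (a 1) (a 3) (a 2))
      + (h2R (a 0) (a 1) (a 3) (a 2))
      + (h2L (a 0) (a 1) (a 3) (a 2))
      - (h1R (a 0) (a 2) (a 1) (a 3))
      + (h2R (a 1) (a 0) (a 2) (a 3))
      - (h2R (a 1) (a 0) (a 3) (a 2))
      - (h2L (a 1) (a 0) (a 3) (a 2))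
      + (h1R (a 1) (a 2) (a 0) (a 3))
      - (h2R (a 2) (a 0) (a 1) (a 3))
end
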